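/- arXiv:math-ph/0408037 — 8 statements merged into one kernel-verified Lean document; each statement's English description precedes it below -/
import Mathlib

section
/- Consider the first-order ODE system on T*N (dim N = k) given by q̇ = ∂H/∂p, ṗ = −∂H/∂q + Π(q,p). Suppose that after the time substitution dτ = 𝒩(q)dt and the change of momenta p̃ = 𝒩(q)p the system becomes Hamiltonian with Hamiltonian H*(q, p̃) = H(q, p̃/𝒩(q)) (of kinetic-energy plus potential type). Then the original system preserves the measure f(q)·Ω^k with density f(q) = 𝒩(q)^{k−1}, where Ω is the canonical symplectic form. -/
open Matrix BigOperators

/-- Phase-space divergence of a vector field on `T*ℝᵏ ≅ ℝᵏ × ℝᵏ`: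
`Σ_i ∂X¹_i/∂q_i + Σ_i ∂X²_i/∂p_i`. -/
noncomputable def phaseDiv {k : ℕ}
    (X : ((Fin k → ℝ) × (Fin k → ℝ)) → ((Fin k → ℝ) × (Fin k → ℝ)))
    (z : (Fin k → ℝ) × (Fin k → ℝ)) : ℝ :=
  (∑ i, (fderiv ℝ X z (Pi.single i 1, 0)).1 i) +
    (∑ i, (fderiv ℝ X z (0, Pi.single i 1)).2 i)

/-- The natural Hamiltonian `H(q,p) = ½ Σ gⁱʲ(q) p_i p_j + V(q)`. -/
noncomputable def natHam {k : ℕ} (g : (Fin k → ℝ) → Matrix (Fin k) (Fin k) ℝ)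
    (V : (Fin k → ℝ) → ℝ) (q p : Fin k → ℝ) : ℝ :=
  (1 / 2) * (p ⬝ᵥ (g q) *ᵥ p) + V q

/-- The rescaled Hamiltonian `H*(q,p̃) = ½ Σ 𝒩(q)⁻² gⁱʲ(q) p̃_i p̃_j + V(q)`. -/
noncomputable def rescaledHam {k : ℕ} (g : (Fin k → ℝ) → Matrix (Fin k) (Fin k) ℝ)
    (N : (Fin k → ℝ) → ℝ) (V : (Fin k → ℝ) → ℝ) (q pt : Fin k → ℝ) : ℝ :=
  (1 / 2) * ((N q) ^ 2)⁻¹ * (pt ⬝ᵥ (g q) *ᵥ pt) + V q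

/-- The reduced Chaplygin vector field `q̇ = ∂H/∂p`, `ṗ = −∂H/∂q + Π(q,p)`. -/
noncomputable def chapField {k : ℕ} (g : (Fin k → ℝ) → Matrix (Fin k) (Fin k) ℝ)
    (V : (Fin k → ℝ) → ℝ) (Pi' : (Fin k → ℝ) → (Fin k → ℝ) → (Fin k → ℝ))
    (z : (Fin k → ℝ) × (Fin k → ℝ)) : (Fin k → ℝ) × (Fin k → ℝ) :=
  ((g z.1) *ᵥ z.2,
    fun i => -(fderiv ℝ (fun q => natHam g V q z.2) z.1 (Pi.single i 1)) +
      Pi' z.1 z.2 i)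

lemma clm_expand {k : ℕ} (L : (Fin k → ℝ) →L[ℝ] ℝ) (v : Fin k → ℝ) :
    L v = ∑ j, v j * L (Pi.single j 1) := by
  have h := LinearMap.pi_apply_eq_sum_univ (L : (Fin k → ℝ) →ₗ[ℝ] ℝ) v
  have e : ∀ j : Fin k, (fun l => if j = l then (1:ℝ) else 0) = Pi.single j 1 := by
    intro j; funext l; simp [Pi.single_apply, eq_comm]
  simp only [ContinuousLinearMap.coe_coe] at h
  rw [h]; congr 1; funext j; rw [e j]; simp [smul_eq_mul]

lemma quad_expand {k : ℕ} (M : Matrix (Fin k) (Fin k) ℝ) (v w : Fin k → ℝ) :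
    v ⬝ᵥ M *ᵥ w = ∑ j, ∑ l, v j * M j l * w l := by
  simp [dotProduct, mulVec, Finset.mul_sum, mul_assoc]

lemma gderiv {k : ℕ} (g : (Fin k → ℝ) → Matrix (Fin k) (Fin k) ℝ)
    (hg : ∀ i j, ContDiff ℝ (⊤ : ℕ∞) fun q => g q i j) (j l : Fin k) (q : Fin k → ℝ) :
    HasFDerivAt (fun q => g q j l) (fderiv ℝ (fun q => g q j l) q) q :=
  ((hg j l).differentiable (by simp) q).hasFDerivAt

lemma quadQ {k : ℕ} (g : (Fin k → ℝ) → Matrix (Fin k) (Fin k) ℝ)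
    (hg : ∀ i j, ContDiff ℝ (⊤ : ℕ∞) fun q => g q i j) (p q : Fin k → ℝ) :
    HasFDerivAt (fun q => p ⬝ᵥ (g q) *ᵥ p)
      (∑ j, ∑ l, (p j * p l) • fderiv ℝ (fun q => g q j l) q) q := by
  have e : (fun q => p ⬝ᵥ (g q) *ᵥ p) = fun q => ∑ j, ∑ l, p j * g q j l * p l :=
    funext fun q => quad_expand _ _ _
  rw [e]
  apply HasFDerivAt.fun_sum; intro j _
  apply HasFDerivAt.fun_sum; intro l _
  have h := ((gderiv g hg j l q).const_mul (p j)).mul_const (p l)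
  refine h.congr_fderiv ?_
  ext w
  simp [smul_eq_mul]; ring

lemma natHamD {k : ℕ} (g : (Fin k → ℝ) → Matrix (Fin k) (Fin k) ℝ)
    (V : (Fin k → ℝ) → ℝ)
    (hg : ∀ i j, ContDiff ℝ (⊤ : ℕ∞) fun q => g q i j) (hV : ContDiff ℝ (⊤ : ℕ∞) V)
    (p q : Fin k → ℝ) :
    HasFDerivAt (fun q => natHam g V q p)
      ((1/2 : ℝ) • (∑ j, ∑ l, (p j * p l) • fderiv ℝ (fun q => g q j l) q)
        + fderiv ℝ V q) q := by
  unfold natHam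
  exact ((quadQ g hg p q).const_mul (1/2)).add ((hV.differentiable (by simp) q).hasFDerivAt)

lemma natHamD_val {k : ℕ} (g : (Fin k → ℝ) → Matrix (Fin k) (Fin k) ℝ)
    (V : (Fin k → ℝ) → ℝ)
    (hg : ∀ i j, ContDiff ℝ (⊤ : ℕ∞) fun q => g q i j) (hV : ContDiff ℝ (⊤ : ℕ∞) V)
    (p q v : Fin k → ℝ) :
    fderiv ℝ (fun q => natHam g V q p) q v
      = (1/2) * (∑ j, ∑ l, p j * fderiv ℝ (fun q => g q j l) q v * p l)
        + fderiv ℝ V q v := by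
  rw [(natHamD g V hg hV p q).fderiv]
  simp [ContinuousLinearMap.sum_apply, smul_eq_mul, Finset.mul_sum]
  ring_nf
  congr 1; funext j; congr 1; funext l; ring

lemma rescaledD_val {k : ℕ} (g : (Fin k → ℝ) → Matrix (Fin k) (Fin k) ℝ)
    (N V : (Fin k → ℝ) → ℝ)
    (hg : ∀ i j, ContDiff ℝ (⊤ : ℕ∞) fun q => g q i j) (hV : ContDiff ℝ (⊤ : ℕ∞) V)
    (hN : ContDiff ℝ (⊤ : ℕ∞) N) (hNpos : ∀ q, 0 < N q)
    (p q : Fin k → ℝ) (i : Fin k) :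
    fderiv ℝ (fun q' => rescaledHam g N V q' (N q • p)) q (Pi.single i 1)
      = -((N q)⁻¹ * fderiv ℝ N q (Pi.single i 1) * (p ⬝ᵥ (g q) *ᵥ p))
        + (1/2) * (∑ j, ∑ l, p j * fderiv ℝ (fun q => g q j l) q (Pi.single i 1) * p l)
        + fderiv ℝ V q (Pi.single i 1) := by
  have hn : N q ≠ 0 := (hNpos q).ne'
  have e : (fun q' => rescaledHam g N V q' (N q • p))
      = fun q' => (1/2) * (((N q')^2)⁻¹ * ((N q)^2 * (p ⬝ᵥ (g q') *ᵥ p))) + V q' := by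
    funext q'
    unfold rescaledHam
    rw [quad_expand, quad_expand]
    simp [Pi.smul_apply, smul_eq_mul, Finset.mul_sum]
    ring_nf
  have hN' : HasFDerivAt N (fderiv ℝ N q) q := (hN.differentiable (by simp) q).hasFDerivAt
  have hsq : HasFDerivAt (fun q' => (N q')^2) (((2:ℕ) * N q ^ 1) • fderiv ℝ N q) q :=
    (hasDerivAt_pow 2 (N q)).comp_hasFDerivAt q hN'
  have hinv : HasFDerivAt (fun q' => ((N q')^2)⁻¹)
      ((-(((N q)^2)^2)⁻¹) • (((2:ℕ) * N q ^ 1) • fderiv ℝ N q)) q :=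
    (hasDerivAt_inv (pow_ne_zero 2 hn)).comp_hasFDerivAt q hsq
  have hQ := quadQ g hg p q
  have hVd : HasFDerivAt V (fderiv ℝ V q) q := (hV.differentiable (by simp) q).hasFDerivAt
  have hF := ((hinv.fun_mul (hQ.const_mul ((N q)^2))).const_mul (1/2)).fun_add hVd
  rw [e, hF.fderiv]
  simp only [ContinuousLinearMap.add_apply, ContinuousLinearMap.smul_apply,
    ContinuousLinearMap.sum_apply, smul_eq_mul, ContinuousLinearMap.coe_smul',
    Pi.smul_apply, ContinuousLinearMap.coe_sum', Finset.sum_apply, Pi.neg_apply,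
    ContinuousLinearMap.neg_apply]
  rw [quad_expand]
  have hS : (∑ x : Fin k, ∑ y : Fin k,
      p x * p y * (fderiv ℝ (fun q => g q x y) q) (Pi.single i 1))
      = ∑ x : Fin k, ∑ y : Fin k,
      p x * (fderiv ℝ (fun q => g q x y) q) (Pi.single i 1) * p y := by
    refine Finset.sum_congr rfl fun x _ => Finset.sum_congr rfl fun y _ => by ring
  rw [hS]
  field_simp
  ring

lemma Pi_formula {k : ℕ} (g : (Fin k → ℝ) → Matrix (Fin k) (Fin k) ℝ)
    (V N : (Fin k → ℝ) → ℝ) (Pi' : (Fin k → ℝ) → (Fin k → ℝ) → (Fin k → ℝ))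
    (hg : ∀ i j, ContDiff ℝ (⊤ : ℕ∞) fun q => g q i j) (hV : ContDiff ℝ (⊤ : ℕ∞) V)
    (hN : ContDiff ℝ (⊤ : ℕ∞) N) (hNpos : ∀ q, 0 < N q)
    (h2 : ∀ q p i, (N q)⁻¹ *
        (fderiv ℝ N q ((g q) *ᵥ p) * p i +
          N q * (chapField g V Pi' (q, p)).2 i) =
      -(fderiv ℝ (fun q' => rescaledHam g N V q' (N q • p)) q (Pi.single i 1)))
    (q p : Fin k → ℝ) (i : Fin k) :
    Pi' q p i = (N q)⁻¹ * (fderiv ℝ N q (Pi.single i 1) * (p ⬝ᵥ (g q) *ᵥ p))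
      - (N q)⁻¹ * (fderiv ℝ N q ((g q) *ᵥ p) * p i) := by
  have hn : N q ≠ 0 := (hNpos q).ne'
  have h := h2 q p i
  rw [rescaledD_val g N V hg hV hN hNpos p q i] at h
  have hcf : (chapField g V Pi' (q,p)).2 i
      = -((1/2) * (∑ j, ∑ l, p j * fderiv ℝ (fun q => g q j l) q (Pi.single i 1) * p l)
          + fderiv ℝ V q (Pi.single i 1)) + Pi' q p i := by
    show -(fderiv ℝ (fun q => natHam g V q p) q (Pi.single i 1)) + _ = _
    rw [natHamD_val g V hg hV p q (Pi.single i 1)]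
  rw [hcf] at h
  field_simp at h ⊢
  linarith [h]


set_option maxHeartbeats 2000000 in
/-- **Reducing multiplier ⟹ invariant measure.** If after the time substitution
`dτ = 𝒩(q) dt` and the momentum change `p̃ = 𝒩(q) p` the reduced Chaplygin
system becomes Hamiltonian with Hamiltonian `H*(q,p̃)`, then the original system
preserves the measure with density `f(q) = 𝒩(q)^{k−1}`. -/
theorem reducing_multiplier_gives_invariant_measure {k : ℕ}
    (g : (Fin k → ℝ) → Matrix (Fin k) (Fin k) ℝ)
    (V N : (Fin k → ℝ) → ℝ)
    (Pi' : (Fin k → ℝ) → (Fin k → ℝ) → (Fin k → ℝ))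
    (hg : ∀ i j, ContDiff ℝ (⊤ : ℕ∞) fun q => g q i j)
    (hgsymm : ∀ q, (g q).IsSymm) (hgpos : ∀ q, (g q).PosDef)
    (hV : ContDiff ℝ (⊤ : ℕ∞) V) (hN : ContDiff ℝ (⊤ : ℕ∞) N) (hNpos : ∀ q, 0 < N q)
    (hPi : ContDiff ℝ (⊤ : ℕ∞) fun z : (Fin k → ℝ) × (Fin k → ℝ) => Pi' z.1 z.2)
    (hPiquad : ∀ q (c : ℝ) p, Pi' q (c • p) = (c ^ 2) • Pi' q p)
    -- the time–and–momentum rescaled system is Hamiltonian with Hamiltonian `H*`: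
    -- `q' = ∂H*/∂p̃` …
    (h1 : ∀ q p i, (N q)⁻¹ * ((g q) *ᵥ p) i =
      fderiv ℝ (fun pt => rescaledHam g N V q pt) (N q • p) (Pi.single i 1))
    -- … and `p̃' = −∂H*/∂q`
    (h2 : ∀ q p i, (N q)⁻¹ *
        (fderiv ℝ N q ((g q) *ᵥ p) * p i +
          N q * (chapField g V Pi' (q, p)).2 i) =
      -(fderiv ℝ (fun q' => rescaledHam g N V q' (N q • p)) q (Pi.single i 1))) :
    ∀ z : (Fin k → ℝ) × (Fin k → ℝ),
      phaseDiv (fun z => (N z.1 ^ (k - 1)) • chapField g V Pi' z) z = 0 := by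
  rintro ⟨q, p⟩
  unfold phaseDiv
  have hn : N q ≠ 0 := (hNpos q).ne'
  set m := k - 1 with hm
  -- Step 1: explicit form of the vector field
  have hXeq : (fun z : (Fin k → ℝ) × (Fin k → ℝ) => (N z.1 ^ (k-1)) • chapField g V Pi' z)
      = fun z' => ((fun i => N z'.1 ^ m * ∑ j, g z'.1 i j * z'.2 j),
          (fun i => N z'.1 ^ m *
            (-((1/2) * (∑ j, ∑ l, z'.2 j * fderiv ℝ (fun q => g q j l) z'.1 (Pi.single i 1) * z'.2 l)
                + fderiv ℝ V z'.1 (Pi.single i 1))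
             + ((N z'.1)⁻¹ * (fderiv ℝ N z'.1 (Pi.single i 1) * (∑ j, ∑ l, z'.2 j * g z'.1 j l * z'.2 l))
                - (N z'.1)⁻¹ * ((∑ j, (∑ l, g z'.1 j l * z'.2 l) * fderiv ℝ N z'.1 (Pi.single j 1)) * z'.2 i))))) := by
    funext z'
    obtain ⟨q', p'⟩ := z'
    unfold chapField
    refine Prod.ext ?_ ?_
    · funext i
      simp only [Prod.smul_mk, Pi.smul_apply, smul_eq_mul]
      congr 1
    · funext i
      simp only [Prod.smul_mk, Pi.smul_apply, smul_eq_mul]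
      congr 1
      rw [natHamD_val g V hg hV p' q' (Pi.single i 1),
        Pi_formula g V N Pi' hg hV hN hNpos h2 q' p' i,
        clm_expand (fderiv ℝ N q') (g q' *ᵥ p'), quad_expand]
      have e1 : ∀ j : Fin k, (g q' *ᵥ p') j = ∑ l, g q' j l * p' l := by
        intro j; simp [Matrix.mulVec, dotProduct]
      simp only [e1]
  rw [hXeq]
  -- elementary derivatives at the point (q,p)
  have hfst := hasFDerivAt_fst (p := ((q,p) : (Fin k → ℝ) × (Fin k → ℝ))) (𝕜 := ℝ)
  have hsnd := hasFDerivAt_snd (p := ((q,p) : (Fin k → ℝ) × (Fin k → ℝ))) (𝕜 := ℝ)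
  have hz2 : ∀ j : Fin k, HasFDerivAt (fun z' : (Fin k → ℝ) × (Fin k → ℝ) => z'.2 j)
      ((ContinuousLinearMap.proj j).comp (ContinuousLinearMap.snd ℝ _ _)) (q, p) :=
    fun j => by have := (hasFDerivAt_apply j p).comp (q,p) hsnd; exact this
  have hNz : HasFDerivAt (fun z' : (Fin k → ℝ) × (Fin k → ℝ) => N z'.1)
      ((fderiv ℝ N q).comp (ContinuousLinearMap.fst ℝ _ _)) (q, p) :=
    ((hN.differentiable (by simp) q).hasFDerivAt).comp (q,p) hfst
  have hgz : ∀ i j : Fin k, HasFDerivAt (fun z' : (Fin k → ℝ) × (Fin k → ℝ) => g z'.1 i j)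
      ((fderiv ℝ (fun q => g q i j) q).comp (ContinuousLinearMap.fst ℝ _ _)) (q, p) :=
    fun i j => by have := (gderiv g hg i j q).comp (q,p) hfst; exact this
  have hA : HasFDerivAt (fun z' : (Fin k → ℝ) × (Fin k → ℝ) => N z'.1 ^ m)
      (((m : ℝ) * N q ^ (m-1)) • ((fderiv ℝ N q).comp (ContinuousLinearMap.fst ℝ _ _))) (q, p) :=
    (hasDerivAt_pow m (N q)).comp_hasFDerivAt (q,p) hNz
  have hinvN : HasFDerivAt (fun z' : (Fin k → ℝ) × (Fin k → ℝ) => (N z'.1)⁻¹)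
      ((-(N q ^ 2)⁻¹) • ((fderiv ℝ N q).comp (ContinuousLinearMap.fst ℝ _ _))) (q, p) :=
    (hasDerivAt_inv hn).comp_hasFDerivAt (q,p) hNz
  have hdG1 : ∀ i j l : Fin k, HasFDerivAt
      (fun z' : (Fin k → ℝ) × (Fin k → ℝ) => fderiv ℝ (fun q => g q j l) z'.1 (Pi.single i 1))
      ((fderiv ℝ (fun q' => fderiv ℝ (fun q => g q j l) q' (Pi.single i 1)) q).comp
        (ContinuousLinearMap.fst ℝ _ _)) (q, p) := by
    intro i j l
    have hd : DifferentiableAt ℝ (fun q' => fderiv ℝ (fun q => g q j l) q' (Pi.single i 1)) q :=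
      ((((hg j l).fderiv_right (m := 1) (by norm_cast)).clm_apply contDiff_const).differentiable one_ne_zero q)
    exact hd.hasFDerivAt.comp (q,p) hfst
  have hdV1 : ∀ i : Fin k, HasFDerivAt
      (fun z' : (Fin k → ℝ) × (Fin k → ℝ) => fderiv ℝ V z'.1 (Pi.single i 1))
      ((fderiv ℝ (fun q' => fderiv ℝ V q' (Pi.single i 1)) q).comp
        (ContinuousLinearMap.fst ℝ _ _)) (q, p) := by
    intro i
    have hd : DifferentiableAt ℝ (fun q' => fderiv ℝ V q' (Pi.single i 1)) q :=
      (((hV.fderiv_right (m := 1) (by norm_cast)).clm_apply contDiff_const).differentiable one_ne_zero q)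
    exact hd.hasFDerivAt.comp (q,p) hfst
  have hdN1 : ∀ i : Fin k, HasFDerivAt
      (fun z' : (Fin k → ℝ) × (Fin k → ℝ) => fderiv ℝ N z'.1 (Pi.single i 1))
      ((fderiv ℝ (fun q' => fderiv ℝ N q' (Pi.single i 1)) q).comp
        (ContinuousLinearMap.fst ℝ _ _)) (q, p) := by
    intro i
    have hd : DifferentiableAt ℝ (fun q' => fderiv ℝ N q' (Pi.single i 1)) q :=
      (((hN.fderiv_right (m := 1) (by norm_cast)).clm_apply contDiff_const).differentiable one_ne_zero q)
    exact hd.hasFDerivAt.comp (q,p) hfst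
  -- first components
  have H1 : ∀ i : Fin k, ∃ L : ((Fin k → ℝ) × (Fin k → ℝ)) →L[ℝ] ℝ,
      HasFDerivAt (fun z' : (Fin k → ℝ) × (Fin k → ℝ) =>
        N z'.1 ^ m * ∑ j, g z'.1 i j * z'.2 j) L (q, p) ∧
      L (Pi.single i 1, 0) =
        N q ^ m * (∑ j, fderiv ℝ (fun q => g q i j) q (Pi.single i 1) * p j)
          + (∑ j, g q i j * p j) * ((m : ℝ) * N q ^ (m-1) * fderiv ℝ N q (Pi.single i 1)) := by
    intro i
    refine ⟨_, hA.mul (HasFDerivAt.fun_sum fun j _ => (hgz i j).mul (hz2 j)), ?_⟩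
    simp [Finset.mul_sum]
    exact Finset.sum_congr rfl fun j _ => by ring
  have H2 : ∀ i : Fin k, ∃ L : ((Fin k → ℝ) × (Fin k → ℝ)) →L[ℝ] ℝ,
      HasFDerivAt (fun z' : (Fin k → ℝ) × (Fin k → ℝ) =>
        N z'.1 ^ m *
          (-((1/2) * (∑ j, ∑ l, z'.2 j * fderiv ℝ (fun q => g q j l) z'.1 (Pi.single i 1) * z'.2 l)
              + fderiv ℝ V z'.1 (Pi.single i 1))
           + ((N z'.1)⁻¹ * (fderiv ℝ N z'.1 (Pi.single i 1) * (∑ j, ∑ l, z'.2 j * g z'.1 j l * z'.2 l))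
              - (N z'.1)⁻¹ * ((∑ j, (∑ l, g z'.1 j l * z'.2 l) * fderiv ℝ N z'.1 (Pi.single j 1)) * z'.2 i)))) L (q, p) ∧
      L (0, Pi.single i 1) =
        N q ^ m * (
          -((1/2) * ((∑ l, fderiv ℝ (fun q => g q i l) q (Pi.single i 1) * p l)
                   + (∑ j, p j * fderiv ℝ (fun q => g q j i) q (Pi.single i 1))))
          + ((N q)⁻¹ * (fderiv ℝ N q (Pi.single i 1) * ((∑ l, g q i l * p l) + (∑ j, p j * g q j i)))
             - (N q)⁻¹ * ((∑ j, g q j i * fderiv ℝ N q (Pi.single j 1)) * p i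
                          + (∑ j, (∑ l, g q j l * p l) * fderiv ℝ N q (Pi.single j 1))))) := by
    intro i
    refine ⟨_, hA.fun_mul
      (HasFDerivAt.fun_add
        (HasFDerivAt.fun_neg
          (HasFDerivAt.fun_add
            (HasFDerivAt.const_mul
              (HasFDerivAt.fun_sum fun j _ => HasFDerivAt.fun_sum fun l _ =>
                ((hz2 j).fun_mul (hdG1 i j l)).fun_mul (hz2 l)) (1/2))
            (hdV1 i)))
        (HasFDerivAt.fun_sub
          (hinvN.fun_mul ((hdN1 i).fun_mul
            (HasFDerivAt.fun_sum fun j _ => HasFDerivAt.fun_sum fun l _ =>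
              ((hz2 j).fun_mul (hgz j l)).fun_mul (hz2 l))))
          (hinvN.fun_mul
            ((HasFDerivAt.fun_sum fun j _ =>
              (HasFDerivAt.fun_sum fun l _ => (hgz j l).fun_mul (hz2 l)).fun_mul (hdN1 j)).fun_mul (hz2 i))))), ?_⟩
    simp only [ContinuousLinearMap.add_apply, ContinuousLinearMap.sub_apply,
      ContinuousLinearMap.neg_apply, ContinuousLinearMap.smul_apply,
      ContinuousLinearMap.coe_comp', Function.comp_apply,
      ContinuousLinearMap.coe_fst', ContinuousLinearMap.coe_snd',
      ContinuousLinearMap.proj_apply, ContinuousLinearMap.sum_apply,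
      smul_eq_mul, map_zero, mul_zero, zero_mul, add_zero, zero_add, neg_zero,
      Pi.single_apply]
    simp only [Finset.sum_add_distrib, mul_ite, ite_mul, mul_one, one_mul,
      mul_zero, zero_mul, Finset.sum_ite_eq, Finset.sum_ite_eq', Finset.mem_univ,
      if_true, Finset.sum_const_zero, add_zero, zero_add]
    have ec : ∀ (f h : Fin k → ℝ), ∑ x, f x * h x = ∑ x, h x * f x :=
      fun f h => Finset.sum_congr rfl fun x _ => mul_comm _ _
    have ec2 : ∀ (f : Fin k → Fin k → ℝ),
        (∑ x : Fin k, ∑ y : Fin k, if x = i then f x y else 0) = ∑ y, f i y := by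
      intro f; rw [Finset.sum_comm]; simp
    rw [ec2 (fun x y => p y * (fderiv ℝ (fun q => g q x y) q) (Pi.single i 1)),
      ec2 (fun x y => p y * g q x y),
      ec (fun x => (fderiv ℝ (fun q => g q i x) q) (Pi.single i 1)) p,
      ec (fun l => g q i l) p,
      ec (fun x => (fderiv ℝ N q) (Pi.single x 1)) (fun x => g q x i)]
    ring
  -- the final algebraic identity
  have final : ∀ (a : Matrix (Fin k) (Fin k) ℝ) (dg : Fin k → Fin k → Fin k → ℝ)
      (dn : Fin k → ℝ) (n : ℝ), n ≠ 0 → (∀ j l, a j l = a l j) →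
      (∀ d j l, dg d j l = dg d l j) →
      (∑ i, (n ^ m * (∑ j, dg i i j * p j)
          + (∑ j, a i j * p j) * ((m:ℝ) * n ^ (m-1) * dn i)))
        + ∑ i, n ^ m * (
            -((1/2) * ((∑ l, dg i i l * p l) + (∑ j, p j * dg i j i)))
            + (n⁻¹ * (dn i * ((∑ l, a i l * p l) + (∑ j, p j * a j i)))
               - n⁻¹ * ((∑ j, a j i * dn j) * p i
                        + (∑ j, (∑ l, a j l * p l) * dn j)))) = 0 := by
    intro a dg dn n hn0 hsa hsd
    rcases Nat.eq_zero_or_pos k with hk0 | hkpos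
    · haveI : IsEmpty (Fin k) := by rw [hk0]; infer_instance
      simp [Finset.univ_eq_empty]
    set T : ℝ := ∑ i, dn i * (∑ j, a i j * p j) with hT
    have e1 : ∀ i : Fin k, (∑ j, p j * dg i j i) = ∑ j, dg i i j * p j :=
      fun i => Finset.sum_congr rfl fun j _ => by rw [hsd i j i]; ring
    have e2 : ∀ i : Fin k, (∑ j, p j * a j i) = ∑ l, a i l * p l :=
      fun i => Finset.sum_congr rfl fun j _ => by rw [hsa j i]; ring
    have e3 : ∑ i, ((∑ j, a j i * dn j) * p i) = T := by
      rw [hT]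
      rw [show (∑ i, ((∑ j, a j i * dn j) * p i)) = ∑ i, ∑ j, a j i * dn j * p i from
        Finset.sum_congr rfl fun i _ => by rw [Finset.sum_mul]]
      rw [Finset.sum_comm]
      refine Finset.sum_congr rfl fun j _ => ?_
      rw [Finset.mul_sum]
      exact Finset.sum_congr rfl fun i _ => by ring
    have e4 : (∑ j, (∑ l, a j l * p l) * dn j) = T := by
      rw [hT]; exact Finset.sum_congr rfl fun j _ => by ring
    have e5 : ∑ i : Fin k, T = (k : ℝ) * T := by
      simp [Finset.sum_const, Finset.card_univ, nsmul_eq_mul]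
    have split1 : (∑ i, (n ^ m * (∑ j, dg i i j * p j)
          + (∑ j, a i j * p j) * ((m:ℝ) * n ^ (m-1) * dn i)))
        = (∑ i, n ^ m * (∑ j, dg i i j * p j)) + ((m:ℝ) * n ^ (m-1)) * T := by
      rw [Finset.sum_add_distrib, hT, Finset.mul_sum]
      congr 1
      exact Finset.sum_congr rfl fun i _ => by ring
    have split2 : (∑ i, n ^ m * (
            -((1/2) * ((∑ l, dg i i l * p l) + (∑ j, p j * dg i j i)))
            + (n⁻¹ * (dn i * ((∑ l, a i l * p l) + (∑ j, p j * a j i)))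
               - n⁻¹ * ((∑ j, a j i * dn j) * p i
                        + (∑ j, (∑ l, a j l * p l) * dn j)))))
        = -(∑ i, n ^ m * (∑ j, dg i i j * p j))
          + n ^ m * n⁻¹ * ((2:ℝ) * T - T - (k:ℝ) * T) := by
      have pointwise : ∀ i : Fin k, n ^ m * (
            -((1/2) * ((∑ l, dg i i l * p l) + (∑ j, p j * dg i j i)))
            + (n⁻¹ * (dn i * ((∑ l, a i l * p l) + (∑ j, p j * a j i)))
               - n⁻¹ * ((∑ j, a j i * dn j) * p i
                        + (∑ j, (∑ l, a j l * p l) * dn j))))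
          = -(n ^ m * (∑ j, dg i i j * p j))
            + n ^ m * n⁻¹ * ((2:ℝ) * (dn i * (∑ j, a i j * p j))
                - ((∑ j, a j i * dn j) * p i) - T) := by
        intro i
        rw [e1 i, e2 i, e4]
        ring
      rw [Finset.sum_congr rfl fun i _ => pointwise i]
      rw [Finset.sum_add_distrib]
      congr 1
      · rw [Finset.sum_neg_distrib]
      · rw [← Finset.mul_sum]
        congr 1
        rw [Finset.sum_sub_distrib, Finset.sum_sub_distrib, ← Finset.mul_sum, e3, e5, ← hT]
    rw [split1, split2]
    have hk1 : k = m + 1 := by omega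
    have hkr : (k : ℝ) = (m : ℝ) + 1 := by rw [hk1]; push_cast; ring
    rcases Nat.eq_zero_or_pos m with hm0 | hmpos
    · rw [hm0, hkr, hm0]
      push_cast
      ring
    · have hp : n ^ m = n ^ (m-1) * n := by
        rw [← pow_succ]; congr 1; omega
      rw [hkr, hp]
      field_simp
      ring
  choose L1 hL1 hv1 using H1
  choose L2 hL2 hv2 using H2
  have hE : HasFDerivAt (fun z' : (Fin k → ℝ) × (Fin k → ℝ) =>
      ((fun i => N z'.1 ^ m * ∑ j, g z'.1 i j * z'.2 j),
        (fun i => N z'.1 ^ m *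
          (-((1/2) * (∑ j, ∑ l, z'.2 j * fderiv ℝ (fun q => g q j l) z'.1 (Pi.single i 1) * z'.2 l)
              + fderiv ℝ V z'.1 (Pi.single i 1))
           + ((N z'.1)⁻¹ * (fderiv ℝ N z'.1 (Pi.single i 1) * (∑ j, ∑ l, z'.2 j * g z'.1 j l * z'.2 l))
              - (N z'.1)⁻¹ * ((∑ j, (∑ l, g z'.1 j l * z'.2 l) * fderiv ℝ N z'.1 (Pi.single j 1)) * z'.2 i))))))
      ((ContinuousLinearMap.pi L1).prod (ContinuousLinearMap.pi L2)) (q, p) :=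
    (hasFDerivAt_pi.2 hL1).prodMk (hasFDerivAt_pi.2 hL2)
  rw [hE.fderiv]
  simp only [ContinuousLinearMap.prod_apply, ContinuousLinearMap.pi_apply]
  rw [Finset.sum_congr rfl fun i _ => hv1 i, Finset.sum_congr rfl fun i _ => hv2 i]
  have hsa : ∀ j l, g q j l = g q l j := fun j l => (hgsymm q).apply l j
  have hsd : ∀ (d j l : Fin k),
      fderiv ℝ (fun q => g q j l) q (Pi.single d 1)
        = fderiv ℝ (fun q => g q l j) q (Pi.single d 1) := by
    intro d j l
    have : (fun q => g q j l) = (fun q => g q l j) := funext fun q' => (hgsymm q').apply l j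
    rw [this]
  exact final (g q) (fun d j l => fderiv ℝ (fun q => g q j l) q (Pi.single d 1))
    (fun j => fderiv ℝ N q (Pi.single j 1)) (N q) hn hsa hsd
end

section
/- Let f(q,p) be a density of an invariant measure of the system q̇ = ∂H/∂p, ṗ = −∂H/∂q + Π(q,p) in the case of zero potential V ≡ 0, where Π is quadratic in p. Then f₀(q) := f(q,0) is also a density of an invariant measure, and moreover f₀(q) remains a density of an invariant measure for the system with any added potential V(q) (i.e. H replaced by H + V with Π unchanged). -/
open Matrix BigOperators

section helpers
variable {k : ℕ}

lemma fderiv_clm_comp' {E F G : Type*} [NormedAddCommGroup E] [NormedSpace ℝ E]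
    [NormedAddCommGroup F] [NormedSpace ℝ F] [NormedAddCommGroup G] [NormedSpace ℝ G]
    (L : F →L[ℝ] G) {F' : E → F} {z : E} (h : DifferentiableAt ℝ F' z) (v : E) :
    fderiv ℝ (fun z => L (F' z)) z v = L (fderiv ℝ F' z v) := by
  have h2 := (L.hasFDerivAt.comp z h.hasFDerivAt).fderiv
  rw [show (fun z => L (F' z)) = (⇑L ∘ F') from rfl, h2]; rfl

lemma fderiv_part1 {E : Type*} [NormedAddCommGroup E] [NormedSpace ℝ E]
    (F : ((Fin k → ℝ) × (Fin k → ℝ)) → E) (z : (Fin k → ℝ) × (Fin k → ℝ))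
    (h : DifferentiableAt ℝ F z) (v : Fin k → ℝ) :
    fderiv ℝ (fun q => F (q, z.2)) z.1 v = fderiv ℝ F z (v, 0) := by
  have h2 : HasFDerivAt (fun q : Fin k → ℝ => F (q, z.2))
      ((fderiv ℝ F z).comp (ContinuousLinearMap.inl ℝ (Fin k → ℝ) (Fin k → ℝ))) z.1 := by
    have := h.hasFDerivAt.comp z.1 (hasFDerivAt_prodMk_left (𝕜 := ℝ) z.1 z.2)
    exact this
  rw [h2.fderiv]; rfl

lemma fderiv_part2 {E : Type*} [NormedAddCommGroup E] [NormedSpace ℝ E]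
    (F : ((Fin k → ℝ) × (Fin k → ℝ)) → E) (z : (Fin k → ℝ) × (Fin k → ℝ))
    (h : DifferentiableAt ℝ F z) (v : Fin k → ℝ) :
    fderiv ℝ (fun p => F (z.1, p)) z.2 v = fderiv ℝ F z (0, v) := by
  have h2 : HasFDerivAt (fun p : Fin k → ℝ => F (z.1, p))
      ((fderiv ℝ F z).comp (ContinuousLinearMap.inr ℝ (Fin k → ℝ) (Fin k → ℝ))) z.2 := by
    have := h.hasFDerivAt.comp z.2 (hasFDerivAt_prodMk_right (𝕜 := ℝ) z.1 z.2)
    exact this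
  rw [h2.fderiv]; rfl

/-- coordinate extraction of the first component of the derivative -/
lemma fderiv_coord1 (F : ((Fin k → ℝ) × (Fin k → ℝ)) → ((Fin k → ℝ) × (Fin k → ℝ)))
    (z : (Fin k → ℝ) × (Fin k → ℝ)) (h : DifferentiableAt ℝ F z) (i : Fin k)
    (v : (Fin k → ℝ) × (Fin k → ℝ)) :
    (fderiv ℝ F z v).1 i = fderiv ℝ (fun z => (F z).1 i) z v := by
  have := fderiv_clm_comp' ((ContinuousLinearMap.proj i :
      (Fin k → ℝ) →L[ℝ] ℝ).comp (ContinuousLinearMap.fst ℝ (Fin k → ℝ) (Fin k → ℝ))) h v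
  simpa using this.symm

lemma fderiv_coord2 (F : ((Fin k → ℝ) × (Fin k → ℝ)) → ((Fin k → ℝ) × (Fin k → ℝ)))
    (z : (Fin k → ℝ) × (Fin k → ℝ)) (h : DifferentiableAt ℝ F z) (i : Fin k)
    (v : (Fin k → ℝ) × (Fin k → ℝ)) :
    (fderiv ℝ F z v).2 i = fderiv ℝ (fun z => (F z).2 i) z v := by
  have := fderiv_clm_comp' ((ContinuousLinearMap.proj i :
      (Fin k → ℝ) →L[ℝ] ℝ).comp (ContinuousLinearMap.snd ℝ (Fin k → ℝ) (Fin k → ℝ))) h v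
  simpa using this.symm

/-- Leibniz rule for the phase divergence. -/
lemma phaseDiv_smul (φ : ((Fin k → ℝ) × (Fin k → ℝ)) → ℝ)
    (X : ((Fin k → ℝ) × (Fin k → ℝ)) → ((Fin k → ℝ) × (Fin k → ℝ)))
    (z : (Fin k → ℝ) × (Fin k → ℝ))
    (hφ : DifferentiableAt ℝ φ z) (hX : DifferentiableAt ℝ X z) :
    phaseDiv (fun z => φ z • X z) z =
      (∑ i, fderiv ℝ φ z (Pi.single i 1, 0) * (X z).1 i) +
      (∑ i, fderiv ℝ φ z (0, Pi.single i 1) * (X z).2 i) +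
      φ z * phaseDiv X z := by
  have h := (hφ.hasFDerivAt.smul hX.hasFDerivAt).fderiv
  unfold phaseDiv
  rw [show (fun z => φ z • X z) = φ • X from rfl, h]
  simp only [ContinuousLinearMap.add_apply, ContinuousLinearMap.coe_smul',
    Pi.smul_apply, ContinuousLinearMap.smulRight_apply, Prod.fst_add, Prod.snd_add,
    Prod.smul_fst, Prod.smul_snd, Pi.add_apply, smul_eq_mul,
    Finset.sum_add_distrib]
  rw [mul_add, Finset.mul_sum, Finset.mul_sum]
  ring

lemma phaseDiv_add (F G : ((Fin k → ℝ) × (Fin k → ℝ)) → ((Fin k → ℝ) × (Fin k → ℝ)))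
    (z : (Fin k → ℝ) × (Fin k → ℝ))
    (hF : DifferentiableAt ℝ F z) (hG : DifferentiableAt ℝ G z) :
    phaseDiv (fun z => F z + G z) z = phaseDiv F z + phaseDiv G z := by
  unfold phaseDiv
  rw [fderiv_fun_add hF hG]
  simp only [ContinuousLinearMap.add_apply, Prod.fst_add, Prod.snd_add, Pi.add_apply,
    Finset.sum_add_distrib]
  ring

end helpers

variable {k : ℕ}

lemma contDiff_natHam (g : (Fin k → ℝ) → Matrix (Fin k) (Fin k) ℝ)
    (hg : ∀ i j, ContDiff ℝ (⊤ : ℕ∞) fun q => g q i j) (V : (Fin k → ℝ) → ℝ)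
    (hV : ContDiff ℝ (⊤ : ℕ∞) V) :
    ContDiff ℝ (⊤ : ℕ∞) (fun z : (Fin k → ℝ) × (Fin k → ℝ) => natHam g V z.1 z.2) := by
  have h1 : ∀ a, ContDiff ℝ (⊤ : ℕ∞) (fun z : (Fin k → ℝ) × (Fin k → ℝ) => z.2 a) := fun a =>
    (ContinuousLinearMap.proj a : (Fin k → ℝ) →L[ℝ] ℝ).contDiff.comp contDiff_snd
  have e : (fun z : (Fin k → ℝ) × (Fin k → ℝ) => natHam g V z.1 z.2)
      = fun z => (1/2) * (∑ a, z.2 a * ∑ b, g z.1 a b * z.2 b) + V z.1 := by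
    funext z; simp [natHam, dotProduct, mulVec]
  rw [e]
  exact (contDiff_const.mul (ContDiff.sum fun a _ => (h1 a).mul
    (ContDiff.sum fun b _ => ((hg a b).comp contDiff_fst).mul (h1 b)))).add
    (hV.comp contDiff_fst)

lemma contDiff_chapField (g : (Fin k → ℝ) → Matrix (Fin k) (Fin k) ℝ)
    (hg : ∀ i j, ContDiff ℝ (⊤ : ℕ∞) fun q => g q i j) (V : (Fin k → ℝ) → ℝ)
    (hV : ContDiff ℝ (⊤ : ℕ∞) V)
    (Pi' : (Fin k → ℝ) → (Fin k → ℝ) → (Fin k → ℝ))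
    (hPi : ContDiff ℝ (⊤ : ℕ∞) fun z : (Fin k → ℝ) × (Fin k → ℝ) => Pi' z.1 z.2) :
    ContDiff ℝ (⊤ : ℕ∞) (chapField g V Pi') := by
  have h1 : ∀ a, ContDiff ℝ (⊤ : ℕ∞) (fun z : (Fin k → ℝ) × (Fin k → ℝ) => z.2 a) := fun a =>
    (ContinuousLinearMap.proj a : (Fin k → ℝ) →L[ℝ] ℝ).contDiff.comp contDiff_snd
  apply ContDiff.prodMk
  · -- first component
    apply contDiff_pi.2
    intro i
    have e : (fun z : (Fin k → ℝ) × (Fin k → ℝ) => (g z.1 *ᵥ z.2) i)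
        = fun z => ∑ b, g z.1 i b * z.2 b := by
      funext z; simp [mulVec, dotProduct]
    rw [e]
    exact ContDiff.sum fun b _ => ((hg i b).comp contDiff_fst).mul (h1 b)
  · apply contDiff_pi.2
    intro i
    apply ContDiff.add
    · apply ContDiff.neg
      apply ContDiff.fderiv_apply (m := (⊤ : ℕ∞)) (n := (⊤ : ℕ∞))
        (f := fun (z : (Fin k → ℝ) × (Fin k → ℝ)) (q : Fin k → ℝ) => natHam g V q z.2)
        (g := fun z => z.1) (k := fun _ => Pi.single i 1)
      · -- uncurried smooth
        have := (contDiff_natHam g hg V hV).comp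
          (((ContinuousLinearMap.snd ℝ ((Fin k → ℝ) × (Fin k → ℝ)) (Fin k → ℝ)).prod
            ((ContinuousLinearMap.snd ℝ (Fin k → ℝ) (Fin k → ℝ)).comp
              (ContinuousLinearMap.fst ℝ ((Fin k → ℝ) × (Fin k → ℝ)) (Fin k → ℝ)))).contDiff)
        have e : (Function.uncurry fun (z : (Fin k → ℝ) × (Fin k → ℝ)) (q : Fin k → ℝ) =>
            natHam g V q z.2) = fun w : ((Fin k → ℝ) × (Fin k → ℝ)) × (Fin k → ℝ) =>
              natHam g V w.2 w.1.2 := rfl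
        rw [e]
        exact this
      · exact contDiff_fst
      · exact contDiff_const
      · exact (by simp)
    · exact (ContinuousLinearMap.proj i : (Fin k → ℝ) →L[ℝ] ℝ).contDiff.comp hPi

section homog
variable {k : ℕ}

lemma natHam_zero_smul (g : (Fin k → ℝ) → Matrix (Fin k) (Fin k) ℝ)
    (q p : Fin k → ℝ) (c : ℝ) :
    natHam g 0 q (c • p) = c ^ 2 * natHam g 0 q p := by
  simp [natHam, smul_dotProduct, dotProduct_smul, mulVec_smul, smul_eq_mul]; ring

lemma chapField_fst_smul (g : (Fin k → ℝ) → Matrix (Fin k) (Fin k) ℝ)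
    (Pi' : (Fin k → ℝ) → (Fin k → ℝ) → (Fin k → ℝ)) (q p : Fin k → ℝ) (c : ℝ) :
    (chapField g 0 Pi' (q, c • p)).1 = c • (chapField g 0 Pi' (q, p)).1 := by
  simp [chapField, mulVec_smul]

lemma diff_natHam_slice (g : (Fin k → ℝ) → Matrix (Fin k) (Fin k) ℝ)
    (hg : ∀ i j, ContDiff ℝ (⊤ : ℕ∞) fun q => g q i j) (p : Fin k → ℝ) :
    Differentiable ℝ (fun q' => natHam g 0 q' p) := by
  have := (contDiff_natHam g hg 0 contDiff_const).differentiable (by simp)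
  exact this.comp (differentiable_id.prodMk (differentiable_const p))

lemma chapField_snd_smul (g : (Fin k → ℝ) → Matrix (Fin k) (Fin k) ℝ)
    (hg : ∀ i j, ContDiff ℝ (⊤ : ℕ∞) fun q => g q i j)
    (Pi' : (Fin k → ℝ) → (Fin k → ℝ) → (Fin k → ℝ))
    (hPiquad : ∀ q (c : ℝ) p, Pi' q (c • p) = (c ^ 2) • Pi' q p)
    (q p : Fin k → ℝ) (c : ℝ) :
    (chapField g 0 Pi' (q, c • p)).2 = (c ^ 2) • (chapField g 0 Pi' (q, p)).2 := by
  funext i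
  have e : (fun q' => natHam g 0 q' (c • p)) = fun q' => c ^ 2 * natHam g 0 q' p := by
    funext q'; exact natHam_zero_smul g q' p c
  simp only [chapField, Pi.smul_apply, smul_eq_mul]
  rw [e, fderiv_const_mul (diff_natHam_slice g hg p q) (c ^ 2), hPiquad q c p]
  simp [smul_eq_mul]; ring

end homog

section divscale
variable {k : ℕ}

lemma phaseDiv_chapField_smul (g : (Fin k → ℝ) → Matrix (Fin k) (Fin k) ℝ)
    (hg : ∀ i j, ContDiff ℝ (⊤ : ℕ∞) fun q => g q i j)
    (Pi' : (Fin k → ℝ) → (Fin k → ℝ) → (Fin k → ℝ))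
    (hPi : ContDiff ℝ (⊤ : ℕ∞) fun z : (Fin k → ℝ) × (Fin k → ℝ) => Pi' z.1 z.2)
    (hPiquad : ∀ q (c : ℝ) p, Pi' q (c • p) = (c ^ 2) • Pi' q p)
    (q p : Fin k → ℝ) {c : ℝ} (hc : c ≠ 0) :
    phaseDiv (chapField g 0 Pi') (q, c • p) = c * phaseDiv (chapField g 0 Pi') (q, p) := by
  set X := chapField g 0 Pi' with hXdef
  have hXd : Differentiable ℝ X :=
    (contDiff_chapField g hg 0 contDiff_const Pi' hPi).differentiable (by simp)
  have h1d : ∀ i, Differentiable ℝ (fun z => (X z).1 i) := fun i =>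
    (((ContinuousLinearMap.proj i : (Fin k → ℝ) →L[ℝ] ℝ).comp
      (ContinuousLinearMap.fst ℝ (Fin k → ℝ) (Fin k → ℝ))).differentiable).comp hXd
  have h2d : ∀ i, Differentiable ℝ (fun z => (X z).2 i) := fun i =>
    (((ContinuousLinearMap.proj i : (Fin k → ℝ) →L[ℝ] ℝ).comp
      (ContinuousLinearMap.snd ℝ (Fin k → ℝ) (Fin k → ℝ))).differentiable).comp hXd
  have hq : ∀ i, (fderiv ℝ X (q, c • p) (Pi.single i 1, 0)).1 i
      = c * (fderiv ℝ X (q, p) (Pi.single i 1, 0)).1 i := by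
    intro i
    rw [fderiv_coord1 X _ (hXd _) i, fderiv_coord1 X _ (hXd _) i,
      ← fderiv_part1 (fun z => (X z).1 i) (q, c • p) (h1d i _) (Pi.single i 1),
      ← fderiv_part1 (fun z => (X z).1 i) (q, p) (h1d i _) (Pi.single i 1)]
    have e : (fun q' => (X (q', c • p)).1 i) = fun q' => c * (X (q', p)).1 i := by
      funext q'
      rw [hXdef, chapField_fst_smul g Pi' q' p c]
      simp
    have hsd : DifferentiableAt ℝ (fun q' => (X (q', p)).1 i) q :=
      ((h1d i).comp (differentiable_id.prodMk (differentiable_const p))) q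
    show fderiv ℝ (fun q' => (X (q', c • p)).1 i) q (Pi.single i 1)
      = c * fderiv ℝ (fun q' => (X (q', p)).1 i) q (Pi.single i 1)
    rw [e, fderiv_const_mul hsd c]
    simp
  have hp : ∀ i, (fderiv ℝ X (q, c • p) (0, Pi.single i 1)).2 i
      = c * (fderiv ℝ X (q, p) (0, Pi.single i 1)).2 i := by
    intro i
    rw [fderiv_coord2 X _ (hXd _) i, fderiv_coord2 X _ (hXd _) i,
      ← fderiv_part2 (fun z => (X z).2 i) (q, c • p) (h2d i _) (Pi.single i 1),
      ← fderiv_part2 (fun z => (X z).2 i) (q, p) (h2d i _) (Pi.single i 1)]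
    show fderiv ℝ (fun p' => (X (q, p')).2 i) (c • p) (Pi.single i 1)
      = c * fderiv ℝ (fun p' => (X (q, p')).2 i) p (Pi.single i 1)
    set G := fun p' => (X (q, p')).2 i with hG
    have hGd : Differentiable ℝ G :=
      (h2d i).comp ((differentiable_const q).prodMk differentiable_id)
    have heq : (fun p' => G (c • p')) = fun p' => c ^ 2 * G p' := by
      funext p'
      show ((X (q, c • p')).2 i) = _
      rw [hXdef, chapField_snd_smul g hg Pi' hPiquad q p' c]
      simp
      exact Or.inl rfl
    have hL : HasFDerivAt (fun p' : Fin k → ℝ => c • p')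
        (c • ContinuousLinearMap.id ℝ (Fin k → ℝ)) p := (hasFDerivAt_id p).const_smul c
    have h1 : HasFDerivAt (fun p' => G (c • p'))
        ((fderiv ℝ G (c • p)).comp (c • ContinuousLinearMap.id ℝ (Fin k → ℝ))) p :=
      (hGd (c • p)).hasFDerivAt.comp p hL
    have h2 : HasFDerivAt (fun p' => G (c • p')) ((c ^ 2) • fderiv ℝ G p) p := by
      rw [heq]; exact (hGd p).hasFDerivAt.const_mul (c ^ 2)
    have hu := h1.unique h2
    have happ : (fderiv ℝ G (c • p)) (c • (Pi.single i 1 : Fin k → ℝ))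
        = c ^ 2 * (fderiv ℝ G p) (Pi.single i 1) := by
      simpa using congrArg (fun (L : (Fin k → ℝ) →L[ℝ] ℝ) => L (Pi.single i 1)) hu
    rw [(fderiv ℝ G (c • p)).map_smul, smul_eq_mul] at happ
    exact mul_left_cancel₀ hc (happ.trans (by ring))
  unfold phaseDiv
  rw [mul_add, Finset.mul_sum, Finset.mul_sum]
  rw [Finset.sum_congr rfl fun i _ => hq i, Finset.sum_congr rfl fun i _ => hp i]

end divscale

/-- **The invariant-measure density may be taken independent of momenta, and is
insensitive to the potential.** If `f(q,p)` is a density of an invariant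
measure of the reduced system with zero potential, then `f₀(q) = f(q,0)` is
also such a density, and it remains a density of an invariant measure after any
potential `V(q)` is added. -/
theorem invariant_measure_density_independent_of_potential {k : ℕ}
    (g : (Fin k → ℝ) → Matrix (Fin k) (Fin k) ℝ)
    (Pi' : (Fin k → ℝ) → (Fin k → ℝ) → (Fin k → ℝ))
    (hg : ∀ i j, ContDiff ℝ (⊤ : ℕ∞) fun q => g q i j)
    (hgsymm : ∀ q, (g q).IsSymm) (hgpos : ∀ q, (g q).PosDef)
    (hPi : ContDiff ℝ (⊤ : ℕ∞) fun z : (Fin k → ℝ) × (Fin k → ℝ) => Pi' z.1 z.2)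
    (hPiquad : ∀ q (c : ℝ) p, Pi' q (c • p) = (c ^ 2) • Pi' q p)
    (f : ((Fin k → ℝ) × (Fin k → ℝ)) → ℝ)
    (hf : ContDiff ℝ (⊤ : ℕ∞) f)
    -- `f` is a density of an invariant measure for the system with `V ≡ 0`
    (hfmeas : ∀ z : (Fin k → ℝ) × (Fin k → ℝ),
      phaseDiv (fun z => f z • chapField g 0 Pi' z) z = 0) :
    -- `f₀(q) = f(q,0)` is a density of an invariant measure for `V ≡ 0` …
    (∀ z : (Fin k → ℝ) × (Fin k → ℝ),
      phaseDiv (fun z => f (z.1, 0) • chapField g 0 Pi' z) z = 0) ∧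
    -- … and for every potential `V(q)` as well
    (∀ V : (Fin k → ℝ) → ℝ, ContDiff ℝ (⊤ : ℕ∞) V →
      ∀ z : (Fin k → ℝ) × (Fin k → ℝ),
        phaseDiv (fun z => f (z.1, 0) • chapField g V Pi' z) z = 0) := by
  have hXc := contDiff_chapField g hg 0 contDiff_const Pi' hPi
  have hXd : Differentiable ℝ (chapField g 0 Pi') := hXc.differentiable (by simp)
  have hfd : Differentiable ℝ f := hf.differentiable (by simp)
  have hf0d : Differentiable ℝ (fun z : (Fin k → ℝ) × (Fin k → ℝ) => f (z.1, 0)) :=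
    hfd.comp (differentiable_fst.prodMk (differentiable_const 0))
  have hf0deriv : ∀ (z v : (Fin k → ℝ) × (Fin k → ℝ)),
      fderiv ℝ (fun z : (Fin k → ℝ) × (Fin k → ℝ) => f (z.1, 0)) z v
        = fderiv ℝ f (z.1, 0) (v.1, 0) := by
    intro z v
    have hL : HasFDerivAt (fun z : (Fin k → ℝ) × (Fin k → ℝ) => (z.1, (0 : Fin k → ℝ)))
        ((ContinuousLinearMap.fst ℝ (Fin k → ℝ) (Fin k → ℝ)).prod 0) z :=
      (hasFDerivAt_fst).prodMk (hasFDerivAt_const 0 z)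
    have hcomp := ((hfd _).hasFDerivAt.comp z hL)
    rw [show (fun z : (Fin k → ℝ) × (Fin k → ℝ) => f (z.1, 0))
        = f ∘ (fun z : (Fin k → ℝ) × (Fin k → ℝ) => (z.1, (0 : Fin k → ℝ))) from rfl,
      hcomp.fderiv]
    rfl
  -- Part 1
  have key : ∀ z : (Fin k → ℝ) × (Fin k → ℝ),
      phaseDiv (fun z => f (z.1, 0) • chapField g 0 Pi' z) z = 0 := by
    rintro ⟨q, p⟩
    set A : ℝ → ℝ := fun c =>
      (∑ i, fderiv ℝ f (q, c • p) (Pi.single i 1, 0) * (chapField g 0 Pi' (q, p)).1 i)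
        + f (q, c • p) * phaseDiv (chapField g 0 Pi') (q, p) with hA
    set B : ℝ → ℝ := fun c =>
      ∑ i, fderiv ℝ f (q, c • p) (0, Pi.single i 1) * (chapField g 0 Pi' (q, p)).2 i with hB
    have hcurve : Continuous fun c : ℝ => ((q, c • p) : (Fin k → ℝ) × (Fin k → ℝ)) :=
      continuous_const.prodMk (continuous_id.smul continuous_const)
    have hfderivcont : Continuous fun z : (Fin k → ℝ) × (Fin k → ℝ) => fderiv ℝ f z :=
      hf.continuous_fderiv (by simp)
    have hApply : ∀ v : (Fin k → ℝ) × (Fin k → ℝ),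
        Continuous fun c : ℝ => fderiv ℝ f (q, c • p) v := fun v =>
      (ContinuousLinearMap.apply ℝ ℝ v).continuous.comp (hfderivcont.comp hcurve)
    have hAc : Continuous A := (continuous_finset_sum _ fun i _ =>
        (hApply _).mul continuous_const).add
      ((hf.continuous.comp hcurve).mul continuous_const)
    have hBc : Continuous B := continuous_finset_sum _ fun i _ =>
      (hApply _).mul continuous_const
    have hAB : ∀ c : ℝ, c ≠ 0 → A c = -(c * B c) := by
      intro c hc
      have h0 := hfmeas (q, c • p)
      rw [phaseDiv_smul f (chapField g 0 Pi') (q, c • p) (hfd _)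
        (hXd _)] at h0
      have e1 : ∀ i, (chapField g 0 Pi' (q, c • p)).1 i
          = c * (chapField g 0 Pi' (q, p)).1 i := fun i => by
        rw [chapField_fst_smul g Pi' q p c]; simp
      have e2 : ∀ i, (chapField g 0 Pi' (q, c • p)).2 i
          = c ^ 2 * (chapField g 0 Pi' (q, p)).2 i := fun i => by
        rw [chapField_snd_smul g hg Pi' hPiquad q p c]; simp
      have e3 : phaseDiv (chapField g 0 Pi') (q, c • p)
          = c * phaseDiv (chapField g 0 Pi') (q, p) :=
        phaseDiv_chapField_smul g hg Pi' hPi hPiquad q p hc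
      have s1 : (∑ i, fderiv ℝ f (q, c • p) (Pi.single i 1, 0)
            * (chapField g 0 Pi' (q, c • p)).1 i)
          = c * ∑ i, fderiv ℝ f (q, c • p) (Pi.single i 1, 0)
            * (chapField g 0 Pi' (q, p)).1 i := by
        rw [Finset.mul_sum]; exact Finset.sum_congr rfl fun i _ => by rw [e1 i]; ring
      have s2 : (∑ i, fderiv ℝ f (q, c • p) (0, Pi.single i 1)
            * (chapField g 0 Pi' (q, c • p)).2 i)
          = c ^ 2 * ∑ i, fderiv ℝ f (q, c • p) (0, Pi.single i 1)
            * (chapField g 0 Pi' (q, p)).2 i := by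
        rw [Finset.mul_sum]; exact Finset.sum_congr rfl fun i _ => by rw [e2 i]; ring
      rw [s1, s2, e3] at h0
      have h4 : c * A c + c ^ 2 * B c = 0 := by
        simp only [hA, hB]; linear_combination h0
      apply mul_left_cancel₀ hc
      linear_combination h4
    have ht1 : Filter.Tendsto A (nhdsWithin 0 {(0:ℝ)}ᶜ) (nhds (A 0)) :=
      (hAc.tendsto 0).mono_left nhdsWithin_le_nhds
    have ht2 : Filter.Tendsto A (nhdsWithin 0 {(0:ℝ)}ᶜ) (nhds 0) := by
      have hcont : Filter.Tendsto (fun c : ℝ => -(c * B c)) (nhdsWithin 0 {(0:ℝ)}ᶜ)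
          (nhds 0) := by
        have h5 : Continuous fun c : ℝ => -(c * B c) := (continuous_id.mul hBc).neg
        have h6 := (h5.tendsto 0).mono_left
          (nhdsWithin_le_nhds (s := {(0:ℝ)}ᶜ))
        simpa using h6
      exact hcont.congr' (by
        filter_upwards [self_mem_nhdsWithin] with c hc
        exact (hAB c hc).symm)
    have hA0 : A 0 = 0 := tendsto_nhds_unique ht1 ht2
    rw [phaseDiv_smul (fun z => f (z.1, 0)) (chapField g 0 Pi') (q, p)
      (hf0d _) (hXd _)]
    have g1 : ∀ i : Fin k, fderiv ℝ (fun z : (Fin k → ℝ) × (Fin k → ℝ) => f (z.1, 0)) (q, p)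
        ((Pi.single i 1 : Fin k → ℝ), (0 : Fin k → ℝ))
        = fderiv ℝ f (q, 0) (Pi.single i 1, 0) := fun i => by rw [hf0deriv]
    have g2 : ∀ i : Fin k, fderiv ℝ (fun z : (Fin k → ℝ) × (Fin k → ℝ) => f (z.1, 0)) (q, p)
        ((0 : Fin k → ℝ), (Pi.single i 1 : Fin k → ℝ)) = 0 := fun i => by
      rw [hf0deriv]
      exact (fderiv ℝ f (q, 0)).map_zero
    have S1 : (∑ i, fderiv ℝ (fun z : (Fin k → ℝ) × (Fin k → ℝ) => f (z.1, 0)) (q, p)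
          (Pi.single i 1, 0) * (chapField g 0 Pi' (q, p)).1 i)
        = ∑ i, fderiv ℝ f (q, 0) (Pi.single i 1, 0) * (chapField g 0 Pi' (q, p)).1 i :=
      Finset.sum_congr rfl fun i _ => by rw [g1 i]
    have S2 : (∑ i, fderiv ℝ (fun z : (Fin k → ℝ) × (Fin k → ℝ) => f (z.1, 0)) (q, p)
          (0, Pi.single i 1) * (chapField g 0 Pi' (q, p)).2 i) = 0 :=
      Finset.sum_eq_zero fun i _ => by rw [g2 i]; ring
    rw [S1, S2]
    have : A 0 = (∑ i, fderiv ℝ f (q, 0) (Pi.single i 1, 0) * (chapField g 0 Pi' (q, p)).1 i)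
        + f (q, 0) * phaseDiv (chapField g 0 Pi') (q, p) := by
      simp only [hA, zero_smul]
    simp only [this] at hA0
    linear_combination hA0
  refine ⟨key, ?_⟩
  -- Part 2
  intro V hV z
  have hVd : Differentiable ℝ V := hV.differentiable (by simp)
  have hsplit : ∀ z : (Fin k → ℝ) × (Fin k → ℝ), chapField g V Pi' z
      = chapField g 0 Pi' z
        + (0, fun i => -(fderiv ℝ V z.1 (Pi.single i 1))) := by
    intro z
    have e2 : (fun q => natHam g V q z.2) = fun q => natHam g 0 q z.2 + V q := by
      funext q'; simp [natHam]
    apply Prod.ext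
    · simp [chapField]
    · funext i
      show -(fderiv ℝ (fun q => natHam g V q z.2) z.1 (Pi.single i 1)) + Pi' z.1 z.2 i = _
      rw [e2, fderiv_fun_add ((diff_natHam_slice g hg z.2) z.1) (hVd z.1)]
      show _ = (-(fderiv ℝ (fun q => natHam g 0 q z.2) z.1 (Pi.single i 1)) + Pi' z.1 z.2 i)
        + -(fderiv ℝ V z.1 (Pi.single i 1))
      simp only [ContinuousLinearMap.add_apply]
      ring
  have hWc : ContDiff ℝ (⊤ : ℕ∞) (fun z : (Fin k → ℝ) × (Fin k → ℝ) =>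
      (((0 : Fin k → ℝ), fun i => -(fderiv ℝ V z.1 (Pi.single i 1)))
        : (Fin k → ℝ) × (Fin k → ℝ))) := by
    apply ContDiff.prodMk contDiff_const
    apply contDiff_pi.2
    intro i
    apply ContDiff.neg
    apply ContDiff.fderiv_apply (m := (⊤ : ℕ∞)) (n := (⊤ : ℕ∞))
      (f := fun (_ : (Fin k → ℝ) × (Fin k → ℝ)) (q : Fin k → ℝ) => V q)
      (g := fun z => z.1) (k := fun _ => Pi.single i 1)
    · exact hV.comp contDiff_snd
    · exact contDiff_fst
    · exact contDiff_const
    · exact (by simp)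
  have hWd := hWc.differentiable (by simp)
  have hYd : Differentiable ℝ (fun z : (Fin k → ℝ) × (Fin k → ℝ) =>
      f (z.1, 0) • (((0 : Fin k → ℝ), fun i => -(fderiv ℝ V z.1 (Pi.single i 1)))
        : (Fin k → ℝ) × (Fin k → ℝ))) := hf0d.smul hWd
  have hrw : (fun z : (Fin k → ℝ) × (Fin k → ℝ) => f (z.1, 0) • chapField g V Pi' z)
      = fun z => (f (z.1, 0) • chapField g 0 Pi' z)
        + (f (z.1, 0) • (((0 : Fin k → ℝ), fun i => -(fderiv ℝ V z.1 (Pi.single i 1)))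
          : (Fin k → ℝ) × (Fin k → ℝ))) := by
    funext z
    rw [hsplit z, smul_add]
  rw [hrw, phaseDiv_add (fun z => f (z.1, 0) • chapField g 0 Pi' z) _ z ((hf0d.smul hXd) z) (hYd z),
    key z, zero_add]
  -- divergence of the second field vanishes
  set Y := fun z : (Fin k → ℝ) × (Fin k → ℝ) =>
    f (z.1, 0) • (((0 : Fin k → ℝ), fun i => -(fderiv ℝ V z.1 (Pi.single i 1)))
      : (Fin k → ℝ) × (Fin k → ℝ)) with hYdef
  have hY1 : ∀ i, (fun z : (Fin k → ℝ) × (Fin k → ℝ) => (Y z).1 i) = fun _ => 0 := by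
    intro i; funext z; simp [hYdef]
  have hY2 : ∀ (z : (Fin k → ℝ) × (Fin k → ℝ)) i v,
      (fderiv ℝ Y z (0, v)).2 i = 0 := by
    intro z i v
    rw [fderiv_coord2 Y z (hYd z) i,
      ← fderiv_part2 (fun z => (Y z).2 i) z (((((ContinuousLinearMap.proj i :
        (Fin k → ℝ) →L[ℝ] ℝ).comp (ContinuousLinearMap.snd ℝ (Fin k → ℝ)
        (Fin k → ℝ))).differentiable).comp hYd) z) v]
    have : (fun p' => (Y (z.1, p')).2 i) = fun _ => (Y (z.1, z.2)).2 i := by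
      funext p'; simp [hYdef]
    rw [this, fderiv_fun_const]
    simp
  unfold phaseDiv
  have hterm1 : ∀ i : Fin k, (fderiv ℝ Y z (Pi.single i 1, 0)).1 i = 0 := by
    intro i
    rw [fderiv_coord1 Y z (hYd z) i, hY1 i, fderiv_fun_const]
    simp
  rw [Finset.sum_eq_zero fun i _ => hterm1 i,
    Finset.sum_eq_zero fun i _ => hY2 z i (Pi.single i 1)]
  simp
end

section
/- The Veselova system 𝓘Ω̇ = 𝓘Ω × Ω + λγ, γ̇ = γ × Ω with λ = −(𝓘Ω × Ω, 𝓘^{-1}γ)/(𝓘^{-1}γ, γ) possesses the invariant measure with density μ(γ) = (γ, 𝓘^{-1}γ)^{1/2} on ℝ³ × ℝ³ {Ω, γ}: the divergence of the vector field with respect to the measure μ dΩ dγ vanishes, i.e. div(μ·X) = 0 where X is the right-hand side vector field. -/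
open Matrix BigOperators

/-- Divergence of a vector field on `ℝ³ × ℝ³ = {(Ω, γ)}`. -/
noncomputable def phaseDiv3
    (X : ((Fin 3 → ℝ) × (Fin 3 → ℝ)) → ((Fin 3 → ℝ) × (Fin 3 → ℝ)))
    (z : (Fin 3 → ℝ) × (Fin 3 → ℝ)) : ℝ :=
  (∑ i, (fderiv ℝ X z (Pi.single i 1, 0)).1 i) +
    (∑ i, (fderiv ℝ X z (0, Pi.single i 1)).2 i)

/-- The Veselova vector field on `ℝ³ × ℝ³`:
`X(Ω,γ) = (𝓘⁻¹(𝓘Ω × Ω + λγ), γ × Ω)` with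
`λ = −(𝓘Ω × Ω, 𝓘⁻¹γ)/(𝓘⁻¹γ, γ)`. -/
noncomputable def veselovaField (I : Matrix (Fin 3) (Fin 3) ℝ)
    (z : (Fin 3 → ℝ) × (Fin 3 → ℝ)) : (Fin 3 → ℝ) × (Fin 3 → ℝ) :=
  (I⁻¹ *ᵥ (crossProduct (I *ᵥ z.1) z.1 +
      (-((crossProduct (I *ᵥ z.1) z.1) ⬝ᵥ (I⁻¹ *ᵥ z.2)) /
        ((I⁻¹ *ᵥ z.2) ⬝ᵥ z.2)) • z.2),
    crossProduct z.2 z.1)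

noncomputable def vecCLM (M : Matrix (Fin 3) (Fin 3) ℝ) : (Fin 3 → ℝ) →L[ℝ] (Fin 3 → ℝ) :=
  LinearMap.toContinuousLinearMap M.mulVecLin

noncomputable def dotCLM : (Fin 3 → ℝ) →L[ℝ] (Fin 3 → ℝ) →L[ℝ] ℝ :=
  LinearMap.toContinuousLinearMap
    ((LinearMap.toContinuousLinearMap : ((Fin 3 → ℝ) →ₗ[ℝ] ℝ) ≃ₗ[ℝ] _).toLinearMap ∘ₗ
      (LinearMap.mk₂ ℝ dotProduct add_dotProduct smul_dotProduct dotProduct_add dotProduct_smul))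

noncomputable def crossCLM : (Fin 3 → ℝ) →L[ℝ] (Fin 3 → ℝ) →L[ℝ] (Fin 3 → ℝ) :=
  LinearMap.toContinuousLinearMap
    ((LinearMap.toContinuousLinearMap : ((Fin 3 → ℝ) →ₗ[ℝ] (Fin 3 → ℝ)) ≃ₗ[ℝ] _).toLinearMap ∘ₗ
      (crossProduct : (Fin 3 → ℝ) →ₗ[ℝ] (Fin 3 → ℝ) →ₗ[ℝ] (Fin 3 → ℝ)))

@[simp] lemma vecCLM_apply (M : Matrix (Fin 3) (Fin 3) ℝ) (v : Fin 3 → ℝ) :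
    vecCLM M v = M *ᵥ v := rfl
@[simp] lemma dotCLM_apply (a b : Fin 3 → ℝ) : dotCLM a b = a ⬝ᵥ b := rfl
@[simp] lemma crossCLM_apply (a b : Fin 3 → ℝ) : crossCLM a b = crossProduct a b := rfl


set_option maxHeartbeats 2000000 in
theorem veselova_key (w0 w1 w2 g0 g1 g2 J00 J01 J02 J11 J12 J22 K00 K01 K02 K10 K11 K12 K20 K21 K22 s : ℝ)
 (hR00 : K00 * J00 + K01 * J01 + K02 * J02 = 1) (hR01 : K00 * J01 + K01 * J11 + K02 * J12 = 0) (hR02 : K00 * J02 + K01 * J12 + K02 * J22 = 0) (hR10 : K10 * J00 + K11 * J01 + K12 * J02 = 0) (hR11 : K10 * J01 + K11 * J11 + K12 * J12 = 1) (hR12 : K10 * J02 + K11 * J12 + K12 * J22 = 0) (hR20 : K20 * J00 + K21 * J01 + K22 * J02 = 0) (hR21 : K20 * J01 + K21 * J11 + K22 * J12 = 0) (hR22 : K20 * J02 + K21 * J12 + K22 * J22 = 1)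
 (hs2 : s * s = g0 * (J00 * g0 + J01 * g1 + J02 * g2) + g1 * (J01 * g0 + J11 * g1 + J12 * g2) + g2 * (J02 * g0 + J12 * g1 + J22 * g2)) :
  (s *
              (J00 *
                    ((K10 * w2 - K20 * w1) *
                        ((J00 * g0 + J01 * g1 + J02 * g2) * g0 +
                            (J01 * g0 + J11 * g1 + J12 * g2) * g1 +
                          (J02 * g0 + J12 * g1 + J22 * g2) * g2) +
                      (-((-(K12 * w2) + (-(K11 * w1) + -(K10 * w0)) + (K00 * w1 - K10 * w0)) *
                              (J02 * g0 + J12 * g1 + J22 * g2)) +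
                          (-((K20 * w0 + K21 * w1 + K22 * w2 + (K20 * w0 - K00 * w2)) *
                                (J01 * g0 + J11 * g1 + J12 * g2)) +
                            -((K10 * w2 - K20 * w1) * (J00 * g0 + J01 * g1 + J02 * g2)))) *
                        g0) +
                  J01 *
                    ((K20 * w0 + K21 * w1 + K22 * w2 + (K20 * w0 - K00 * w2)) *
                        ((J00 * g0 + J01 * g1 + J02 * g2) * g0 +
                            (J01 * g0 + J11 * g1 + J12 * g2) * g1 +
                          (J02 * g0 + J12 * g1 + J22 * g2) * g2) +
                      (-((-(K12 * w2) + (-(K11 * w1) + -(K10 * w0)) + (K00 * w1 - K10 * w0)) *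
                              (J02 * g0 + J12 * g1 + J22 * g2)) +
                          (-((K20 * w0 + K21 * w1 + K22 * w2 + (K20 * w0 - K00 * w2)) *
                                (J01 * g0 + J11 * g1 + J12 * g2)) +
                            -((K10 * w2 - K20 * w1) * (J00 * g0 + J01 * g1 + J02 * g2)))) *
                        g1) +
                J02 *
                  ((-(K12 * w2) + (-(K11 * w1) + -(K10 * w0)) + (K00 * w1 - K10 * w0)) *
                      ((J00 * g0 + J01 * g1 + J02 * g2) * g0 +
                          (J01 * g0 + J11 * g1 + J12 * g2) * g1 +
                        (J02 * g0 + J12 * g1 + J22 * g2) * g2) +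
                    (-((-(K12 * w2) + (-(K11 * w1) + -(K10 * w0)) + (K00 * w1 - K10 * w0)) *
                            (J02 * g0 + J12 * g1 + J22 * g2)) +
                        (-((K20 * w0 + K21 * w1 + K22 * w2 + (K20 * w0 - K00 * w2)) *
                              (J01 * g0 + J11 * g1 + J12 * g2)) +
                          -((K10 * w2 - K20 * w1) * (J00 * g0 + J01 * g1 + J02 * g2)))) *
                      g2)) +
            s *
              (J01 *
                    ((-(K22 * w2) + (-(K21 * w1) + -(K20 * w0)) + (K11 * w2 - K21 * w1)) *
                        ((J00 * g0 + J01 * g1 + J02 * g2) * g0 +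
                            (J01 * g0 + J11 * g1 + J12 * g2) * g1 +
                          (J02 * g0 + J12 * g1 + J22 * g2) * g2) +
                      (-((K00 * w0 + K01 * w1 + K02 * w2 + (K01 * w1 - K11 * w0)) *
                              (J02 * g0 + J12 * g1 + J22 * g2)) +
                          (-((K21 * w0 - K01 * w2) * (J01 * g0 + J11 * g1 + J12 * g2)) +
                            -((-(K22 * w2) + (-(K21 * w1) + -(K20 * w0)) +
                                  (K11 * w2 - K21 * w1)) *
                                (J00 * g0 + J01 * g1 + J02 * g2)))) *
                        g0) +
                  J11 *
                    ((K21 * w0 - K01 * w2) *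
                        ((J00 * g0 + J01 * g1 + J02 * g2) * g0 +
                            (J01 * g0 + J11 * g1 + J12 * g2) * g1 +
                          (J02 * g0 + J12 * g1 + J22 * g2) * g2) +
                      (-((K00 * w0 + K01 * w1 + K02 * w2 + (K01 * w1 - K11 * w0)) *
                              (J02 * g0 + J12 * g1 + J22 * g2)) +
                          (-((K21 * w0 - K01 * w2) * (J01 * g0 + J11 * g1 + J12 * g2)) +
                            -((-(K22 * w2) + (-(K21 * w1) + -(K20 * w0)) +
                                  (K11 * w2 - K21 * w1)) *
                                (J00 * g0 + J01 * g1 + J02 * g2)))) *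
                        g1) +
                J12 *
                  ((K00 * w0 + K01 * w1 + K02 * w2 + (K01 * w1 - K11 * w0)) *
                      ((J00 * g0 + J01 * g1 + J02 * g2) * g0 +
                          (J01 * g0 + J11 * g1 + J12 * g2) * g1 +
                        (J02 * g0 + J12 * g1 + J22 * g2) * g2) +
                    (-((K00 * w0 + K01 * w1 + K02 * w2 + (K01 * w1 - K11 * w0)) *
                            (J02 * g0 + J12 * g1 + J22 * g2)) +
                        (-((K21 * w0 - K01 * w2) * (J01 * g0 + J11 * g1 + J12 * g2)) +
                          -((-(K22 * w2) + (-(K21 * w1) + -(K20 * w0)) +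
                                (K11 * w2 - K21 * w1)) *
                              (J00 * g0 + J01 * g1 + J02 * g2)))) *
                      g2)) +
          s *
            (J02 *
                  ((K10 * w0 + K11 * w1 + K12 * w2 + (K12 * w2 - K22 * w1)) *
                      ((J00 * g0 + J01 * g1 + J02 * g2) * g0 +
                          (J01 * g0 + J11 * g1 + J12 * g2) * g1 +
                        (J02 * g0 + J12 * g1 + J22 * g2) * g2) +
                    (-((K02 * w1 - K12 * w0) * (J02 * g0 + J12 * g1 + J22 * g2)) +
                        (-((-(K02 * w2) + (-(K01 * w1) + -(K00 * w0)) +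
                                (K22 * w0 - K02 * w2)) *
                              (J01 * g0 + J11 * g1 + J12 * g2)) +
                          -((K10 * w0 + K11 * w1 + K12 * w2 + (K12 * w2 - K22 * w1)) *
                              (J00 * g0 + J01 * g1 + J02 * g2)))) *
                      g0) +
                J12 *
                  ((-(K02 * w2) + (-(K01 * w1) + -(K00 * w0)) + (K22 * w0 - K02 * w2)) *
                      ((J00 * g0 + J01 * g1 + J02 * g2) * g0 +
                          (J01 * g0 + J11 * g1 + J12 * g2) * g1 +
                        (J02 * g0 + J12 * g1 + J22 * g2) * g2) +
                    (-((K02 * w1 - K12 * w0) * (J02 * g0 + J12 * g1 + J22 * g2)) +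
                        (-((-(K02 * w2) + (-(K01 * w1) + -(K00 * w0)) +
                                (K22 * w0 - K02 * w2)) *
                              (J01 * g0 + J11 * g1 + J12 * g2)) +
                          -((K10 * w0 + K11 * w1 + K12 * w2 + (K12 * w2 - K22 * w1)) *
                              (J00 * g0 + J01 * g1 + J02 * g2)))) *
                      g1) +
              J22 *
                ((K02 * w1 - K12 * w0) *
                    ((J00 * g0 + J01 * g1 + J02 * g2) * g0 +
                        (J01 * g0 + J11 * g1 + J12 * g2) * g1 +
                      (J02 * g0 + J12 * g1 + J22 * g2) * g2) +
                  (-((K02 * w1 - K12 * w0) * (J02 * g0 + J12 * g1 + J22 * g2)) +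
                      (-((-(K02 * w2) + (-(K01 * w1) + -(K00 * w0)) + (K22 * w0 - K02 * w2)) *
                            (J01 * g0 + J11 * g1 + J12 * g2)) +
                        -((K10 * w0 + K11 * w1 + K12 * w2 + (K12 * w2 - K22 * w1)) *
                            (J00 * g0 + J01 * g1 + J02 * g2)))) *
                    g2))) *
        (s * 2) +
      ((g0 * J00 + g1 * J01 + g2 * J02 + (J00 * g0 + J01 * g1 + J02 * g2)) *
              (g1 * w2 - g2 * w1) +
            (g0 * J01 + g1 * J11 + g2 * J12 + (J01 * g0 + J11 * g1 + J12 * g2)) *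
              (g2 * w0 - g0 * w2) +
          (g0 * J02 + g1 * J12 + g2 * J22 + (J02 * g0 + J12 * g1 + J22 * g2)) *
            (g0 * w1 - g1 * w0)) *
        ((J00 * g0 + J01 * g1 + J02 * g2) * g0 +
            (J01 * g0 + J11 * g1 + J12 * g2) * g1 +
          (J02 * g0 + J12 * g1 + J22 * g2) * g2) =
    0
 := by
  linear_combination ((2)*(w2)*(g0)*(g2)*(J12)*s^2 + (2)*(w2)*(g0)*(g1)*(J11)*s^2 + (2)*(w2)*(g0)^2*(J01)*s^2 + (-2)*(w1)*(g0)*(g2)*(J22)*s^2 + (-2)*(w1)*(g0)*(g1)*(J12)*s^2 + (-2)*(w1)*(g0)^2*(J02)*s^2) * hR00 + ((-2)*(w2)*(g2)^2*(J22)*s^2 + (-2)*(w2)*(g1)*(g2)*(J12)*s^2 + (-4)*(w2)*(g0)*(g2)*(J02)*s^2 + (-2)*(w2)*(g0)*(g1)*(J01)*s^2 + (-2)*(w2)*(g0)^2*(J00)*s^2 + (-2)*(w1)*(g1)*(g2)*(J22)*s^2 + (-2)*(w1)*(g1)^2*(J12)*s^2 + (-2)*(w1)*(g0)*(g1)*(J02)*s^2)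 * hR01 + ((2)*(w2)*(g2)^2*(J12)*s^2 + (2)*(w2)*(g1)*(g2)*(J11)*s^2 + (2)*(w2)*(g0)*(g2)*(J01)*s^2 + (2)*(w1)*(g1)*(g2)*(J12)*s^2 + (2)*(w1)*(g1)^2*(J11)*s^2 + (2)*(w1)*(g0)*(g2)*(J02)*s^2 + (4)*(w1)*(g0)*(g1)*(J01)*s^2 + (2)*(w1)*(g0)^2*(J00)*s^2) * hR02 + ((2)*(w2)*(g2)^2*(J22)*s^2 + (4)*(w2)*(g1)*(g2)*(J12)*s^2 + (2)*(w2)*(g1)^2*(J11)*s^2 + (2)*(w2)*(g0)*(g2)*(J02)*s^2 + (2)*(w2)*(g0)*(g1)*(J01)*s^2 + (2)*(w0)*(g0)*(g2)*(J22)*s^2 + (2)*(w0)*(g0)*(g1)*(J12)*s^2 + (2)*(w0)*(g0)^2*(J02)*s^2) * hR10 + ((-2)*(w2)*(g1)*(g2)*(J02)*s^2 + (-2)*(w2)*(g1)^2*(J01)*s^2 + (-2)*(w2)*(g0)*(g1)*(J00)*s^2 + (2)*(w0)*(g1)*(g2)*(J22)*s^2 + (2)*(w0)*(g1)^2*(J12)*s^2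 + (2)*(w0)*(g0)*(g1)*(J02)*s^2) * hR11 + ((-2)*(w2)*(g2)^2*(J02)*s^2 + (-2)*(w2)*(g1)*(g2)*(J01)*s^2 + (-2)*(w2)*(g0)*(g2)*(J00)*s^2 + (-2)*(w0)*(g1)*(g2)*(J12)*s^2 + (-2)*(w0)*(g1)^2*(J11)*s^2 + (-2)*(w0)*(g0)*(g2)*(J02)*s^2 + (-4)*(w0)*(g0)*(g1)*(J01)*s^2 + (-2)*(w0)*(g0)^2*(J00)*s^2) * hR12 + ((-2)*(w1)*(g2)^2*(J22)*s^2 + (-4)*(w1)*(g1)*(g2)*(J12)*s^2 + (-2)*(w1)*(g1)^2*(J11)*s^2 + (-2)*(w1)*(g0)*(g2)*(J02)*s^2 + (-2)*(w1)*(g0)*(g1)*(J01)*s^2 + (-2)*(w0)*(g0)*(g2)*(J12)*s^2 + (-2)*(w0)*(g0)*(g1)*(J11)*s^2 + (-2)*(w0)*(g0)^2*(J01)*s^2) * hR20 + ((2)*(w1)*(g1)*(g2)*(J02)*s^2 + (2)*(w1)*(g1)^2*(J01)*s^2 + (2)*(w1)*(g0)*(g1)*(J00)*s^2 + (2)*(w0)*(g2)^2*(J22)*s^2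 + (2)*(w0)*(g1)*(g2)*(J12)*s^2 + (4)*(w0)*(g0)*(g2)*(J02)*s^2 + (2)*(w0)*(g0)*(g1)*(J01)*s^2 + (2)*(w0)*(g0)^2*(J00)*s^2) * hR21 + ((2)*(w1)*(g2)^2*(J02)*s^2 + (2)*(w1)*(g1)*(g2)*(J01)*s^2 + (2)*(w1)*(g0)*(g2)*(J00)*s^2 + (-2)*(w0)*(g2)^2*(J12)*s^2 + (-2)*(w0)*(g1)*(g2)*(J11)*s^2 + (-2)*(w0)*(g0)*(g2)*(J01)*s^2) * hR22 + ((-2)*(w2)*(g1)*(g2)*(J02) + (-2)*(w2)*(g1)^2*(J01) + (2)*(w2)*(g0)*(g2)*(J12) + (2)*(w2)*(g0)*(g1)*(J11) + (-2)*(w2)*(g0)*(g1)*(J00) + (2)*(w2)*(g0)^2*(J01) + (2)*(w1)*(g2)^2*(J02) + (2)*(w1)*(g1)*(g2)*(J01) + (-2)*(w1)*(g0)*(g2)*(J22) + (2)*(w1)*(g0)*(g2)*(J00) + (-2)*(w1)*(g0)*(g1)*(J12) + (-2)*(w1)*(g0)^2*(J02) + (-2)*(w0)*(g2)^2*(J12)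 + (2)*(w0)*(g1)*(g2)*(J22) + (-2)*(w0)*(g1)*(g2)*(J11) + (2)*(w0)*(g1)^2*(J12) + (-2)*(w0)*(g0)*(g2)*(J01) + (2)*(w0)*(g0)*(g1)*(J02)) * hs2


set_option maxHeartbeats 2000000 in
/-- **Invariant measure of the Veselova system.** The Veselova vector field
possesses the invariant measure with density `μ(γ) = (γ, 𝓘⁻¹γ)^{1/2}` on
`ℝ³ × ℝ³`: the divergence of `μ·X` vanishes wherever `(𝓘⁻¹γ, γ) > 0`. -/
theorem veselova_invariant_measure
    (I : Matrix (Fin 3) (Fin 3) ℝ) (hIsymm : I.IsSymm) (hIpos : I.PosDef) :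
    ∀ z : (Fin 3 → ℝ) × (Fin 3 → ℝ), 0 < (I⁻¹ *ᵥ z.2) ⬝ᵥ z.2 →
      phaseDiv3
        (fun z => Real.sqrt (z.2 ⬝ᵥ (I⁻¹ *ᵥ z.2)) • veselovaField I z) z = 0 := by
  intro z hz
  set J := I⁻¹ with hJ
  -- basic derivatives
  have h1 : HasFDerivAt (fun z : (Fin 3 → ℝ) × (Fin 3 → ℝ) => z.1)
      (ContinuousLinearMap.fst ℝ _ _) z := hasFDerivAt_fst
  have h2 : HasFDerivAt (fun z : (Fin 3 → ℝ) × (Fin 3 → ℝ) => z.2)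
      (ContinuousLinearMap.snd ℝ _ _) z := hasFDerivAt_snd
  have hIω : HasFDerivAt (fun z : (Fin 3 → ℝ) × (Fin 3 → ℝ) => I *ᵥ z.1)
      ((vecCLM I).comp (ContinuousLinearMap.fst ℝ _ _)) z :=
    ((vecCLM I).hasFDerivAt).comp z h1
  have hJγ : HasFDerivAt (fun z : (Fin 3 → ℝ) × (Fin 3 → ℝ) => J *ᵥ z.2)
      ((vecCLM J).comp (ContinuousLinearMap.snd ℝ _ _)) z :=
    ((vecCLM J).hasFDerivAt).comp z h2
  have hf := crossCLM.hasFDerivAt_of_bilinear hIω h1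
  have hc := dotCLM.hasFDerivAt_of_bilinear hJγ h2
  have hd := dotCLM.hasFDerivAt_of_bilinear hf hJγ
  have hcne : (J *ᵥ z.2) ⬝ᵥ z.2 ≠ 0 := ne_of_gt hz
  have hinv := (hasDerivAt_inv hcne).comp_hasFDerivAt z hc
  have hlam := (hd.neg).mul hinv
  have hfγ := hf.add (hlam.smul h2)
  have hX1 := ((vecCLM J).hasFDerivAt).comp z hfγ
  have hX2 := crossCLM.hasFDerivAt_of_bilinear h2 h1
  have he := dotCLM.hasFDerivAt_of_bilinear h2 hJγ
  have hene : z.2 ⬝ᵥ (J *ᵥ z.2) ≠ 0 := by rwa [dotProduct_comm] at hcne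
  have hs := (Real.hasDerivAt_sqrt hene).comp_hasFDerivAt z he
  have hF1 := hs.smul hX1
  have hF2 := hs.smul hX2
  have hF : HasFDerivAt (fun z : (Fin 3 → ℝ) × (Fin 3 → ℝ) =>
      Real.sqrt (z.2 ⬝ᵥ (I⁻¹ *ᵥ z.2)) • veselovaField I z) _ z := HasFDerivAt.prodMk hF1 hF2
  rw [phaseDiv3, hF.fderiv]
  simp only [ContinuousLinearMap.prod_apply, ContinuousLinearMap.add_apply,
    ContinuousLinearMap.coe_comp', Function.comp_apply, ContinuousLinearMap.smul_apply,
    ContinuousLinearMap.smulRight_apply, ContinuousLinearMap.coe_fst',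
    ContinuousLinearMap.coe_snd', ContinuousLinearMap.precompL_apply, smul_eq_mul,
    ContinuousLinearMap.neg_apply, Pi.add_apply, Pi.smul_apply, Pi.neg_apply]
  simp only [ContinuousLinearMap.precompR, ContinuousLinearMap.compL_apply,
    ContinuousLinearMap.coe_comp', Function.comp_apply, ContinuousLinearMap.coe_fst',
    ContinuousLinearMap.coe_snd', vecCLM_apply, dotCLM_apply, crossCLM_apply]
  simp only [Matrix.mulVec_zero, dotProduct_zero, zero_dotProduct, map_zero,
    LinearMap.zero_apply, smul_zero, zero_add, add_zero, mul_zero, zero_mul, smul_eq_mul,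
    cross_apply, Matrix.mulVec, dotProduct, Fin.sum_univ_three, Pi.single_apply,
    Matrix.cons_val_zero, Matrix.cons_val_one, Matrix.head_cons, Matrix.cons_val_two,
    Matrix.tail_cons, Pi.add_apply, Pi.smul_apply]
  have e20 : ((2:Fin 3) = 0) = False := by decide
  have e21 : ((2:Fin 3) = 1) = False := by decide
  have e22 : ((2:Fin 3) = 2) = True := by decide
  have e10 : ((1:Fin 3) = 0) = False := by decide
  have e11 : ((1:Fin 3) = 1) = True := by decide
  have e12 : ((1:Fin 3) = 2) = False := by decide
  have e00 : ((0:Fin 3) = 0) = True := by decide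
  have e01 : ((0:Fin 3) = 1) = False := by decide
  have e02 : ((0:Fin 3) = 2) = False := by decide
  simp only [e20, e21, e22, e10, e11, e12, e00, e01, e02, if_true, if_false]
  norm_num
  -- symmetry of J
  have hJsymm : J.IsSymm := by
    rw [Matrix.IsSymm, hJ, Matrix.transpose_nonsing_inv, hIsymm]
  have h10 : J 1 0 = J 0 1 := hJsymm.apply 0 1
  have h20 : J 2 0 = J 0 2 := hJsymm.apply 0 2
  have h21 : J 2 1 = J 1 2 := hJsymm.apply 1 2
  simp only [h10, h20, h21]
  -- inverse relations
  have hdetI : IsUnit I.det := isUnit_iff_ne_zero.2 hIpos.det_pos.ne'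
  have hIJm : I * J = 1 := Matrix.mul_nonsing_inv I hdetI
  have hR : ∀ a b : Fin 3, I a 0 * J 0 b + I a 1 * J 1 b + I a 2 * J 2 b
      = if a = b then 1 else 0 := by
    intro a b
    have := congrFun (congrFun hIJm a) b
    simpa [Matrix.mul_apply, Fin.sum_univ_three, Matrix.one_apply] using this
  have hR00 := hR 0 0; have hR01 := hR 0 1; have hR02 := hR 0 2
  have hR10 := hR 1 0; have hR11 := hR 1 1; have hR12 := hR 1 2
  have hR20 := hR 2 0; have hR21 := hR 2 1; have hR22 := hR 2 2
  simp only [h10, h20, h21] at hR00 hR01 hR02 hR10 hR11 hR12 hR20 hR21 hR22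
  norm_num at hR00 hR01 hR02 hR10 hR11 hR12 hR20 hR21 hR22
  -- determinant of J
  have hdetJne : J.det ≠ 0 := by
    have := Matrix.isUnit_nonsing_inv_det I hdetI
    rw [← hJ] at this
    exact this.ne_zero
  have hdet : J.det = J 0 0 * (J 1 1 * J 2 2 - J 1 2 * J 1 2)
      - J 0 1 * (J 0 1 * J 2 2 - J 1 2 * J 0 2)
      + J 0 2 * (J 0 1 * J 1 2 - J 1 1 * J 0 2) := by
    rw [Matrix.det_fin_three, h10, h20, h21]; ring
  rw [hdet] at hdetJne
  -- positivity facts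
  have hcpos : 0 < z.2 0 * (J 0 0 * z.2 0 + J 0 1 * z.2 1 + J 0 2 * z.2 2) +
      z.2 1 * (J 0 1 * z.2 0 + J 1 1 * z.2 1 + J 1 2 * z.2 2) +
      z.2 2 * (J 0 2 * z.2 0 + J 1 2 * z.2 1 + J 2 2 * z.2 2) := by
    have : (J *ᵥ z.2) ⬝ᵥ z.2 = z.2 0 * (J 0 0 * z.2 0 + J 0 1 * z.2 1 + J 0 2 * z.2 2) +
        z.2 1 * (J 0 1 * z.2 0 + J 1 1 * z.2 1 + J 1 2 * z.2 2) +
        z.2 2 * (J 0 2 * z.2 0 + J 1 2 * z.2 1 + J 2 2 * z.2 2) := by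
      simp [Matrix.mulVec, dotProduct, Fin.sum_univ_three, h10, h20, h21]
      ring
    rw [← this]; exact hz
  have hs2 := Real.mul_self_sqrt hcpos.le
  have hsne : Real.sqrt (z.2 0 * (J 0 0 * z.2 0 + J 0 1 * z.2 1 + J 0 2 * z.2 2) +
      z.2 1 * (J 0 1 * z.2 0 + J 1 1 * z.2 1 + J 1 2 * z.2 2) +
      z.2 2 * (J 0 2 * z.2 0 + J 1 2 * z.2 1 + J 2 2 * z.2 2)) ≠ 0 :=
    (Real.sqrt_pos.2 hcpos).ne'
  have hcne2 := hcpos.ne'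
  have hcne3 : ((J 0 0 * z.2 0 + J 0 1 * z.2 1 + J 0 2 * z.2 2) * z.2 0 +
      (J 0 1 * z.2 0 + J 1 1 * z.2 1 + J 1 2 * z.2 2) * z.2 1 +
      (J 0 2 * z.2 0 + J 1 2 * z.2 1 + J 2 2 * z.2 2) * z.2 2) ≠ 0 := by
    have heq : ((J 0 0 * z.2 0 + J 0 1 * z.2 1 + J 0 2 * z.2 2) * z.2 0 +
      (J 0 1 * z.2 0 + J 1 1 * z.2 1 + J 1 2 * z.2 2) * z.2 1 +
      (J 0 2 * z.2 0 + J 1 2 * z.2 1 + J 2 2 * z.2 2) * z.2 2) =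
      z.2 0 * (J 0 0 * z.2 0 + J 0 1 * z.2 1 + J 0 2 * z.2 2) +
      z.2 1 * (J 0 1 * z.2 0 + J 1 1 * z.2 1 + J 1 2 * z.2 2) +
      z.2 2 * (J 0 2 * z.2 0 + J 1 2 * z.2 1 + J 2 2 * z.2 2) := by ring
    rw [heq]; exact hcpos.ne'
  set s := Real.sqrt (z.2 0 * (J 0 0 * z.2 0 + J 0 1 * z.2 1 + J 0 2 * z.2 2) +
      z.2 1 * (J 0 1 * z.2 0 + J 1 1 * z.2 1 + J 1 2 * z.2 2) +
      z.2 2 * (J 0 2 * z.2 0 + J 1 2 * z.2 1 + J 2 2 * z.2 2)) with hsdef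
  have hc' : z.2 0 * (J 0 0 * z.2 0 + J 0 1 * z.2 1 + J 0 2 * z.2 2) + z.2 1 * (z.2 0 * J 0 1 + z.2 1 * J 1 1 + z.2 2 * J 1 2) + z.2 2 * (z.2 0 * J 0 2 + z.2 1 * J 1 2 + z.2 2 * J 2 2) ≠ 0 := by
    intro h; apply hcne3; linear_combination h
  field_simp [hcne3, hc']
  have key := veselova_key (z.1 0) (z.1 1) (z.1 2) (z.2 0) (z.2 1) (z.2 2)
    (J 0 0) (J 0 1) (J 0 2) (J 1 1) (J 1 2) (J 2 2)
    (I 0 0) (I 0 1) (I 0 2) (I 1 0) (I 1 1) (I 1 2) (I 2 0) (I 2 1) (I 2 2) s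
    hR00 hR01 hR02 hR10 hR11 hR12 hR20 hR21 hR22 hs2
  linear_combination key
end

section
/- The map (p,q) ↦ q̇ given by q̇ = (det A/(q,Aq))·[A^{-1}p − (p,A^{-1}q)q] inverts the degenerate Legendre transform p_i = (1/det A)[(q,Aq)A_i q̇_i − (q̇,Aq)A_i q_i] on the constraint set (q,q) = 1, (q,q̇) = 0: substituting this q̇ into the formula for p recovers p, provided (q,p) = 0. -/
open Matrix

/-!
With `s = (q,Aq)` and `c = (p,A⁻¹q)`, the candidate velocity is `q̇ = (l/s)(A⁻¹p - c q)`.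
Symmetry of `A` gives `(A⁻¹p, Aq) = (p,q) = 0`, so `(q̇,Aq) = -l c`, and the two `c`-terms of
`l⁻¹ [s A q̇ - (q̇,Aq) A q] = p - c Aq + c Aq` cancel. The scalar `l` plays the role of
`det A`, of which only `det A ≠ 0` matters. For `A = diag(a)` with `a > 0`, `s ≠ 0` because `A`
is positive definite and `q ≠ 0`.
-/

namespace Matrix

variable {ι K : Type*} [Fintype ι] [DecidableEq ι] [Field K]

def legendreMomentum (A : Matrix ι ι K) (l : K) (q qdot : ι → K) : ι → K :=
  l⁻¹ • ((q ⬝ᵥ A *ᵥ q) • A *ᵥ qdot - (qdot ⬝ᵥ A *ᵥ q) • A *ᵥ q)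

noncomputable def legendreVelocity (A : Matrix ι ι K) (l : K) (q p : ι → K) : ι → K :=
  (l / (q ⬝ᵥ A *ᵥ q)) • (A⁻¹ *ᵥ p - (p ⬝ᵥ A⁻¹ *ᵥ q) • q)

theorem IsSymm.inv_mulVec_dotProduct_mulVec {A : Matrix ι ι K} (hA : A.IsSymm)
    (hdet : IsUnit A.det) (p q : ι → K) : (A⁻¹ *ᵥ p) ⬝ᵥ (A *ᵥ q) = p ⬝ᵥ q := by
  rw [dotProduct_mulVec, ← mulVec_transpose, hA.eq, mulVec_mulVec, mul_nonsing_inv A hdet,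
    one_mulVec]

theorem legendreVelocity_dotProduct_mulVec {A : Matrix ι ι K} (hA : A.IsSymm)
    (hdet : IsUnit A.det) (l : K) {q p : ι → K} (hs : q ⬝ᵥ A *ᵥ q ≠ 0) (hqp : q ⬝ᵥ p = 0) :
    legendreVelocity A l q p ⬝ᵥ A *ᵥ q = -(l * (p ⬝ᵥ A⁻¹ *ᵥ q)) := by
  rw [legendreVelocity, smul_dotProduct, sub_dotProduct, smul_dotProduct,
    hA.inv_mulVec_dotProduct_mulVec hdet, dotProduct_comm p q, hqp, smul_eq_mul, smul_eq_mul]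
  field_simp
  ring

theorem legendreMomentum_legendreVelocity {A : Matrix ι ι K} (hA : A.IsSymm)
    (hdet : IsUnit A.det) {l : K} (hl : l ≠ 0) {q p : ι → K} (hs : q ⬝ᵥ A *ᵥ q ≠ 0)
    (hqp : q ⬝ᵥ p = 0) : legendreMomentum A l q (legendreVelocity A l q p) = p := by
  have hAq : A *ᵥ legendreVelocity A l q p = (l / (q ⬝ᵥ A *ᵥ q)) •
      (p - (p ⬝ᵥ A⁻¹ *ᵥ q) • A *ᵥ q) := by
    rw [legendreVelocity, mulVec_smul, mulVec_sub, mulVec_smul, mulVec_mulVec,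
      mul_nonsing_inv A hdet, one_mulVec]
  rw [legendreMomentum, legendreVelocity_dotProduct_mulVec hA hdet l hs hqp, hAq, smul_smul,
    mul_div_cancel₀ l hs, neg_smul, sub_neg_eq_add, smul_sub, smul_smul,
    sub_add_cancel, inv_smul_smul₀ hl]

end Matrix

/-- **Inversion of the degenerate Legendre transform on the sphere.** On the
constraint set `(q,q) = 1`, `(q,p) = 0`, substituting
`q̇ = (det A/(q,Aq))·[A⁻¹p − (p,A⁻¹q)q]` into the componentwise momentum map
`p_i = (det A)⁻¹[(q,Aq)A_i q̇_i − (q̇,Aq)A_i q_i]` recovers `p`. -/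
theorem legendre_inversion_on_sphere {n : ℕ}
    (a : Fin n → ℝ) (ha : ∀ i, 0 < a i)
    (A : Matrix (Fin n) (Fin n) ℝ) (hA : A = Matrix.diagonal a)
    (q p : Fin n → ℝ) (hq : q ⬝ᵥ q = 1) (hqp : q ⬝ᵥ p = 0) :
    ∀ i,
      (A.det)⁻¹ *
        ((q ⬝ᵥ A *ᵥ q) * a i *
            ((A.det / (q ⬝ᵥ A *ᵥ q)) •
              (A⁻¹ *ᵥ p - (p ⬝ᵥ A⁻¹ *ᵥ q) • q)) i -
          (((A.det / (q ⬝ᵥ A *ᵥ q)) •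
              (A⁻¹ *ᵥ p - (p ⬝ᵥ A⁻¹ *ᵥ q) • q)) ⬝ᵥ A *ᵥ q) * a i * q i) =
      p i := by
  have hpos : A.PosDef := hA ▸ PosDef.diagonal ha
  have hq0 : q ≠ 0 := by
    rintro rfl
    simp at hq
  have hs : q ⬝ᵥ A *ᵥ q ≠ 0 := (hpos.dotProduct_mulVec_pos hq0).ne'
  have hdet : A.det ≠ 0 := hpos.det_pos.ne'
  have hinv := legendreMomentum_legendreVelocity (hA ▸ isSymm_diagonal a) hdet.isUnit hdet hs hqp
  intro i
  rw [← congrFun hinv i]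
  simp only [legendreMomentum, legendreVelocity, Pi.smul_apply, Pi.sub_apply, smul_eq_mul, hA,
    mulVec_diagonal]
  ring
end

section
/- Along solutions of the L+R system 𝓑ω̇ = ad_ω^T 𝓘ω, Γ̇ = Γ ad_ω + ad_ω^T Γ with 𝓑 = 𝓘 + Γ, the kinetic energy ½⟨ω, 𝓑ω⟩ is conserved: its time derivative vanishes identically. -/
open Matrix

/-! Differentiating, `d/dt ⟨ω, 𝓑ω⟩ = 2⟨ω, 𝓑ω̇⟩ + ⟨ω, Γ̇ω⟩` since `𝓑` is symmetric. By the equations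
of motion, `⟨ω, 𝓑ω̇⟩ = ⟨ad_ω ω, 𝓘ω⟩` and `⟨ω, Γ̇ω⟩ = ⟨ω, Γ ad_ω ω⟩ + ⟨ad_ω ω, Γω⟩`, and `ad_ω ω = 0`. -/

theorem HasDerivAt.dotProduct_mulVec {𝕜 : Type*} [NontriviallyNormedField 𝕜]
    {m n : Type*} [Fintype m] [Fintype n]
    {x : 𝕜 → m → 𝕜} {y : 𝕜 → n → 𝕜} {A : 𝕜 → Matrix m n 𝕜}
    {x' : m → 𝕜} {y' : n → 𝕜} {A' : Matrix m n 𝕜} {t : 𝕜}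
    (hx : HasDerivAt x x' t) (hA : ∀ i j, HasDerivAt (fun s => A s i j) (A' i j) t)
    (hy : HasDerivAt y y' t) :
    HasDerivAt (fun s => x s ⬝ᵥ (A s *ᵥ y s))
      (x' ⬝ᵥ (A t *ᵥ y t) + x t ⬝ᵥ (A' *ᵥ y t) + x t ⬝ᵥ (A t *ᵥ y')) t := by
  simp only [dot_mulVec_eq_sum_sum, ← Finset.sum_add_distrib]
  refine HasDerivAt.fun_sum fun j _ => HasDerivAt.fun_sum fun i _ => ?_
  exact (((hasDerivAt_pi.1 hx i).fun_mul (hA i j)).fun_mul (hasDerivAt_pi.1 hy j)).congr_deriv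
    (by ring)

theorem dotProduct_mulVec_mul_add_transpose_mul_eq_zero {R : Type*} [CommSemiring R]
    {n : Type*} [Fintype n] (G N : Matrix n n R) {v : n → R} (hv : N *ᵥ v = 0) :
    v ⬝ᵥ ((G * N + Nᵀ * G) *ᵥ v) = 0 := by
  rw [add_mulVec, ← mulVec_mulVec, ← mulVec_mulVec, hv, mulVec_zero, dotProduct_add,
    dotProduct_zero, zero_add, dotProduct_transpose_mulVec, hv, dotProduct_zero]

theorem LplusR_energy_conserved_general {n : ℕ}
    (ad : (Fin n → ℝ) →ₗ[ℝ] Matrix (Fin n) (Fin n) ℝ)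
    (had : ∀ v : Fin n → ℝ, (ad v) *ᵥ v = 0)
    (I : Matrix (Fin n) (Fin n) ℝ) (hIsymm : I.IsSymm)
    (ω ωdot : ℝ → Fin n → ℝ) (Γ : ℝ → Matrix (Fin n) (Fin n) ℝ)
    (hΓsymm : ∀ t, (Γ t).IsSymm)
    (hω : ∀ t, HasDerivAt ω (ωdot t) t)
    (hωdot : ∀ t, (I + Γ t) *ᵥ ωdot t = (ad (ω t))ᵀ *ᵥ (I *ᵥ ω t))
    (hΓ : ∀ t i j, HasDerivAt (fun s => Γ s i j)
      ((Γ t * ad (ω t) + (ad (ω t))ᵀ * Γ t) i j) t) :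
    ∀ t, HasDerivAt (fun s => (1 / 2) * (ω s ⬝ᵥ ((I + Γ s) *ᵥ ω s))) 0 t := by
  intro t
  have hBsymm : (I + Γ t)ᵀ = I + Γ t := (hIsymm.add (hΓsymm t)).eq
  have hBderiv : ∀ i j, HasDerivAt (fun s => (I + Γ s) i j)
      ((Γ t * ad (ω t) + (ad (ω t))ᵀ * Γ t) i j) t := fun i j =>
    (hΓ t i j).const_add (I i j)
  have hω_B_ωdot : ω t ⬝ᵥ ((I + Γ t) *ᵥ ωdot t) = 0 := by
    rw [hωdot t, dotProduct_transpose_mulVec, had, dotProduct_zero]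
  have hωdot_B_ω : ωdot t ⬝ᵥ ((I + Γ t) *ᵥ ω t) = 0 := by
    rw [← dotProduct_transpose_mulVec, hBsymm, hω_B_ωdot]
  have hω_Γdot_ω := dotProduct_mulVec_mul_add_transpose_mul_eq_zero (Γ t) _ (had (ω t))
  refine (((hω t).dotProduct_mulVec hBderiv (hω t)).const_mul (1 / 2)).congr_deriv ?_
  rw [hωdot_B_ω, hω_Γdot_ω, hω_B_ωdot, add_zero, add_zero, mul_zero]

/-- **Energy conservation for L+R systems.** Along solutions of
`𝓑ω̇ = ad_ωᵀ 𝓘ω`, `Γ̇ = Γ ad_ω + ad_ωᵀ Γ` with `𝓑 = 𝓘 + Γ`, the kinetic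
energy `½⟨ω, 𝓑ω⟩` is conserved. -/
theorem LplusR_energy_conserved {n : ℕ}
    (ad : (Fin n → ℝ) →ₗ[ℝ] Matrix (Fin n) (Fin n) ℝ)
    (had : ∀ v : Fin n → ℝ, (ad v) *ᵥ v = 0)
    (I : Matrix (Fin n) (Fin n) ℝ) (hIsymm : I.IsSymm) (hIinv : IsUnit I.det)
    (ω ωdot : ℝ → Fin n → ℝ) (Γ : ℝ → Matrix (Fin n) (Fin n) ℝ)
    (hΓsymm : ∀ t, (Γ t).IsSymm)
    (hBinv : ∀ t, IsUnit (I + Γ t).det)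
    (hω : ∀ t, HasDerivAt ω (ωdot t) t)
    (hωdot : ∀ t, (I + Γ t) *ᵥ ωdot t = (ad (ω t))ᵀ *ᵥ (I *ᵥ ω t))
    (hΓ : ∀ t i j, HasDerivAt (fun s => Γ s i j)
      ((Γ t * ad (ω t) + (ad (ω t))ᵀ * Γ t) i j) t) :
    ∀ t, HasDerivAt (fun s => (1 / 2) * (ω s ⬝ᵥ ((I + Γ s) *ᵥ ω s))) 0 t :=
  LplusR_energy_conserved_general ad had I hIsymm ω ωdot Γ hΓsymm hω hωdot hΓ
end

section
/- Let Γ = aα⊗α + bβ⊗β + cγ⊗γ with α,β,γ an orthonormal basis of ℝ³. Then det(𝓘 + Γ) = det 𝓘 · [1 + a(α,𝓘^{-1}α) + b(β,𝓘^{-1}β) + c(γ,𝓘^{-1}γ) + (bc/det 𝓘)(α,𝓘α) + (ac/det 𝓘)(β,𝓘β) + (ab/det 𝓘)(γ,𝓘γ) + abc/det 𝓘]. -/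
/-!
Let `P` be the orthogonal matrix with rows `α, β, γ` and `J = P 𝓘 Pᵀ`. Then
`𝓘 + Γ = Pᵀ (J + diag(a, b, c)) P`, so `det(𝓘 + Γ) = det(J + diag(a, b, c))`. Expanding the
latter in `a, b, c`, the coefficients are `det J = det 𝓘`, the diagonal entries of
`adj J = det J • J⁻¹` and those of `J`; since `J⁻¹ = P 𝓘⁻¹ Pᵀ`, these are `(α, 𝓘⁻¹α), …` and
`(α, 𝓘α), …`.
-/

open Matrix

namespace Matrix

theorem det_add_diagonal_fin_three {R : Type*} [CommRing R] (J : Matrix (Fin 3) (Fin 3) R)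
    (a b c : R) :
    (J + diagonal ![a, b, c]).det =
      J.det + a * J.adjugate 0 0 + b * J.adjugate 1 1 + c * J.adjugate 2 2 +
        b * c * J 0 0 + a * c * J 1 1 + a * b * J 2 2 + a * b * c := by
  simp only [det_fin_three, adjugate_fin_three, add_apply, diagonal_apply_eq, diagonal_apply_ne,
    ne_eq, Fin.reduceEq, not_false_eq_true, add_zero, of_apply, cons_val_zero, cons_val_one,
    cons_val]
  ring

theorem adjugate_eq_det_smul_inv {R : Type*} [CommRing R] {n : Type*} [Fintype n] [DecidableEq n]
    {J : Matrix n n R} (hJ : IsUnit J.det) : J.adjugate = J.det • J⁻¹ := by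
  rw [inv_def, smul_smul, Ring.mul_inverse_cancel _ hJ, one_smul]

theorem det_add_diagonal_fin_three_of_det_ne_zero {K : Type*} [Field K] {J : Matrix (Fin 3) (Fin 3) K}
    (hJ : J.det ≠ 0) (a b c : K) :
    (J + diagonal ![a, b, c]).det =
      J.det * (1 + a * J⁻¹ 0 0 + b * J⁻¹ 1 1 + c * J⁻¹ 2 2 +
        b * c / J.det * J 0 0 + a * c / J.det * J 1 1 + a * b / J.det * J 2 2 +
        a * b * c / J.det) := by
  rw [det_add_diagonal_fin_three, adjugate_eq_det_smul_inv hJ.isUnit]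
  simp only [smul_apply, smul_eq_mul]
  field_simp

variable {R : Type*} [CommRing R] {n m : Type*} [Fintype n] [DecidableEq n]

theorem transpose_mul_diagonal_mul (P : Matrix n m R) (d : n → R) :
    Pᵀ * diagonal d * P = ∑ i, d i • vecMulVec (P i) (P i) := by
  ext j k
  rw [mul_apply]
  simp only [mul_diagonal, transpose_apply, Matrix.sum_apply, Matrix.smul_apply,
    vecMulVec_apply, smul_eq_mul]
  exact Finset.sum_congr rfl fun i _ => by ring

variable {P : Matrix n n R}

theorem det_transpose_mul_mul (hP : Pᵀ * P = 1) (X : Matrix n n R) :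
    (Pᵀ * X * P).det = X.det := by
  rw [← inv_eq_left_inv hP]
  exact det_conj' (P.isUnit_iff_isUnit_det.2 (isUnit_det_of_left_inverse hP)) X

theorem det_mul_mul_transpose (hP : P * Pᵀ = 1) (X : Matrix n n R) :
    (P * X * Pᵀ).det = X.det := by
  simpa using det_transpose_mul_mul (P := Pᵀ) (by rwa [transpose_transpose]) X

theorem transpose_mul_mul_transpose_mul (hP : Pᵀ * P = 1) (X : Matrix n n R) :
    Pᵀ * (P * X * Pᵀ) * P = X := by
  rw [← mul_assoc, ← mul_assoc, hP, one_mul, mul_assoc, hP, mul_one]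

theorem inv_mul_mul_transpose (hP : P * Pᵀ = 1) (X : Matrix n n R) :
    (P * X * Pᵀ)⁻¹ = P * X⁻¹ * Pᵀ := by
  rw [mul_inv_rev, mul_inv_rev, inv_eq_right_inv hP, inv_eq_left_inv hP, mul_assoc]

end Matrix

theorem det_inertia_plus_rank_ones_general
    (I : Matrix (Fin 3) (Fin 3) ℝ) (hIinv : IsUnit I.det)
    (a b c : ℝ) (α β γ : Fin 3 → ℝ)
    (hαα : α ⬝ᵥ α = 1) (hββ : β ⬝ᵥ β = 1) (hγγ : γ ⬝ᵥ γ = 1)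
    (hαβ : α ⬝ᵥ β = 0) (hαγ : α ⬝ᵥ γ = 0) (hβγ : β ⬝ᵥ γ = 0) :
    (I + a • vecMulVec α α + b • vecMulVec β β + c • vecMulVec γ γ).det =
      I.det * (1 + a * (α ⬝ᵥ I⁻¹ *ᵥ α) + b * (β ⬝ᵥ I⁻¹ *ᵥ β) +
        c * (γ ⬝ᵥ I⁻¹ *ᵥ γ) +
        (b * c / I.det) * (α ⬝ᵥ I *ᵥ α) +
        (a * c / I.det) * (β ⬝ᵥ I *ᵥ β) +
        (a * b / I.det) * (γ ⬝ᵥ I *ᵥ γ) +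
        a * b * c / I.det) := by
  set P : Matrix (Fin 3) (Fin 3) ℝ := of ![α, β, γ]
  have hP : P * Pᵀ = 1 := by
    ext i j
    change ![α, β, γ] i ⬝ᵥ ![α, β, γ] j = _
    fin_cases i <;> fin_cases j <;>
      simp [hαα, hββ, hγγ, hαβ, hαγ, hβγ, dotProduct_comm β α, dotProduct_comm γ α,
        dotProduct_comm γ β]
  have hPtP : Pᵀ * P = 1 := mul_eq_one_comm.mp hP
  have hΓ : I + a • vecMulVec α α + b • vecMulVec β β + c • vecMulVec γ γ =
      Pᵀ * (P * I * Pᵀ + diagonal ![a, b, c]) * P := by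
    rw [mul_add, add_mul, transpose_mul_mul_transpose_mul hPtP, transpose_mul_diagonal_mul,
      Fin.sum_univ_three]
    simp only [add_assoc]
    rfl
  have hdet : (P * I * Pᵀ).det = I.det := det_mul_mul_transpose hP I
  rw [hΓ, det_transpose_mul_mul hPtP, det_add_diagonal_fin_three_of_det_ne_zero (hdet ▸ hIinv.ne_zero), hdet,
    inv_mul_mul_transpose hP]
  simp only [mul_mul_apply, transpose_transpose]
  rfl

/-- **Determinant of the spherical-support inertia operator.** For
`Γ = aα⊗α + bβ⊗β + cγ⊗γ` with `α, β, γ` an orthonormal basis of `ℝ³`,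
`det(𝓘 + Γ) = det 𝓘 · [1 + a(α,𝓘⁻¹α) + b(β,𝓘⁻¹β) + c(γ,𝓘⁻¹γ)
 + (bc/det 𝓘)(α,𝓘α) + (ac/det 𝓘)(β,𝓘β) + (ab/det 𝓘)(γ,𝓘γ) + abc/det 𝓘]`. -/
theorem det_inertia_plus_rank_ones
    (I : Matrix (Fin 3) (Fin 3) ℝ) (hIsymm : I.IsSymm) (hIinv : IsUnit I.det)
    (a b c : ℝ) (α β γ : Fin 3 → ℝ)
    (hαα : α ⬝ᵥ α = 1) (hββ : β ⬝ᵥ β = 1) (hγγ : γ ⬝ᵥ γ = 1)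
    (hαβ : α ⬝ᵥ β = 0) (hαγ : α ⬝ᵥ γ = 0) (hβγ : β ⬝ᵥ γ = 0) :
    (I + a • vecMulVec α α + b • vecMulVec β β + c • vecMulVec γ γ).det =
      I.det * (1 + a * (α ⬝ᵥ I⁻¹ *ᵥ α) + b * (β ⬝ᵥ I⁻¹ *ᵥ β) +
        c * (γ ⬝ᵥ I⁻¹ *ᵥ γ) +
        (b * c / I.det) * (α ⬝ᵥ I *ᵥ α) +
        (a * c / I.det) * (β ⬝ᵥ I *ᵥ β) +
        (a * b / I.det) * (γ ⬝ᵥ I *ᵥ γ) +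
        a * b * c / I.det) :=
  det_inertia_plus_rank_ones_general I hIinv a b c α β γ hαα hββ hγγ hαβ hαγ hβγ
end

section
/- For 𝓘 a symmetric positive definite 3×3 matrix, γ ∈ ℝ³ with (𝓘^{-1}γ, γ) < 1/ε as ε → ∞: the limit of (𝐈 + ε γ ⊗ 𝓘^{-1}γ)^{-1} as ε → ∞ equals 𝐈 − (1/(𝓘^{-1}γ,γ)) γ ⊗ 𝓘^{-1}γ, where (u ⊗ v)w = (v,w)u. Consequently the ε → ∞ limit of the L+R vector field 𝓘Ω̇ = 𝓘(𝓘 + εγ⊗γ)^{-1}(𝓘Ω × Ω) is the Veselova vector field 𝓘Ω̇ = 𝓘Ω × Ω − ((𝓘Ω × Ω, 𝓘^{-1}γ)/(𝓘^{-1}γ,γ))γ. -/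
open Matrix Filter Topology

/-!
Write `M = γ ⊗ 𝓘⁻¹γ` and `c = (𝓘⁻¹γ, γ)`, which is positive since `𝓘⁻¹` is positive definite.
As `M² = c M`, Sherman–Morrison gives `(𝐈 + εM)⁻¹ = 𝐈 − ε / (1 + εc) M`, and the coefficient
tends to `1 / c`. For the L+R field, symmetry of `𝓘` gives `𝓘 + ε γ ⊗ γ = (𝐈 + εM) 𝓘`, hence
`𝓘 (𝓘 + ε γ ⊗ γ)⁻¹ = (𝐈 + εM)⁻¹`, and the second limit follows from the first.
-/

theorem tendsto_div_one_add_mul_atTop {c : ℝ} (hc : c ≠ 0) :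
    Tendsto (fun t : ℝ => t / (1 + t * c)) atTop (𝓝 c⁻¹) := by
  have h : Tendsto (fun t : ℝ => (t⁻¹ + c)⁻¹) atTop (𝓝 c⁻¹) := by
    simpa using (tendsto_inv_atTop_zero.add_const c).inv₀ (by simpa using hc)
  refine h.congr' ?_
  filter_upwards [eventually_ne_atTop 0] with t ht
  field_simp

namespace Matrix

section Field

variable {n K : Type*} [Fintype n] [DecidableEq n] [Field K]

theorem inv_one_add_smul_vecMulVec {t : K} {u v : n → K} (h : 1 + t * (v ⬝ᵥ u) ≠ 0) :
    (1 + t • vecMulVec u v)⁻¹ = 1 - (t / (1 + t * (v ⬝ᵥ u))) • vecMulVec u v := by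
  apply inv_eq_right_inv
  have hsq : vecMulVec u v * vecMulVec u v = (v ⬝ᵥ u) • vecMulVec u v := by
    rw [vecMulVec_mul_vecMulVec, vecMulVec_smul]
  have hcoeff : t - t / (1 + t * (v ⬝ᵥ u)) - t * (t / (1 + t * (v ⬝ᵥ u))) * (v ⬝ᵥ u) = 0 := by
    field_simp
    ring
  calc (1 + t • vecMulVec u v) * (1 - (t / (1 + t * (v ⬝ᵥ u))) • vecMulVec u v)
      = 1 + (t - t / (1 + t * (v ⬝ᵥ u)) - t * (t / (1 + t * (v ⬝ᵥ u))) * (v ⬝ᵥ u)) •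
          vecMulVec u v := by
        simp only [Matrix.mul_sub, Matrix.add_mul, Matrix.one_mul, Matrix.mul_one,
          Matrix.smul_mul, Matrix.mul_smul, hsq, smul_smul]
        module
    _ = 1 := by rw [hcoeff, zero_smul, add_zero]

theorem add_smul_vecMulVec_vecMul (A : Matrix n n K) (t : K) (u v : n → K) :
    A + t • vecMulVec u (v ᵥ* A) = (1 + t • vecMulVec u v) * A := by
  rw [Matrix.add_mul, Matrix.one_mul, Matrix.smul_mul, vecMulVec_mul]

theorem mul_inv_add_smul_vecMulVec_self {A : Matrix n n K} (hA : A.IsSymm) (hdet : IsUnit A.det)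
    (t : K) (u : n → K) :
    A * (A + t • vecMulVec u u)⁻¹ = (1 + t • vecMulVec u (A⁻¹ *ᵥ u))⁻¹ := by
  have hu : (A⁻¹ *ᵥ u) ᵥ* A = u := by
    rw [← mulVec_transpose, hA.eq, mulVec_mulVec, mul_nonsing_inv _ hdet, one_mulVec]
  have hfac : A + t • vecMulVec u u = (1 + t • vecMulVec u (A⁻¹ *ᵥ u)) * A := by
    rw [← add_smul_vecMulVec_vecMul, hu]
  rw [hfac, mul_inv_rev, ← Matrix.mul_assoc, mul_nonsing_inv _ hdet, Matrix.one_mul]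

end Field

variable {n : Type*} [Fintype n] [DecidableEq n]

theorem tendsto_inv_one_add_smul_vecMulVec_atTop {u v : n → ℝ} (h : v ⬝ᵥ u ≠ 0) :
    Tendsto (fun t : ℝ => (1 + t • vecMulVec u v)⁻¹) atTop
      (𝓝 (1 - (v ⬝ᵥ u)⁻¹ • vecMulVec u v)) := by
  have hlim := ((tendsto_div_one_add_mul_atTop h).smul_const (vecMulVec u v)).const_sub 1
  refine hlim.congr' ?_
  filter_upwards [eventually_ne_atTop (-(v ⬝ᵥ u)⁻¹)] with t ht
  refine (inv_one_add_smul_vecMulVec ?_).symm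
  contrapose! ht
  field_simp
  linarith

end Matrix

/-- **The LR (Veselova) system as a limit of L+R systems.** As `ε → ∞`,
`(𝐈 + ε γ⊗𝓘⁻¹γ)⁻¹ → 𝐈 − (1/(𝓘⁻¹γ,γ)) γ⊗𝓘⁻¹γ`, and consequently the L+R
vector field `𝓘(𝓘 + εγ⊗γ)⁻¹(𝓘Ω × Ω)` tends to the Veselova vector field
`𝓘Ω × Ω − ((𝓘Ω × Ω, 𝓘⁻¹γ)/(𝓘⁻¹γ,γ))γ`. -/
theorem LplusR_limit_is_veselova
    (I : Matrix (Fin 3) (Fin 3) ℝ) (hIsymm : I.IsSymm) (hIpos : I.PosDef)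
    (γ : Fin 3 → ℝ) (hγ : γ ≠ 0) :
    Tendsto (fun ε : ℝ => (1 + ε • vecMulVec γ (I⁻¹ *ᵥ γ))⁻¹) atTop
      (nhds (1 - ((I⁻¹ *ᵥ γ) ⬝ᵥ γ)⁻¹ • vecMulVec γ (I⁻¹ *ᵥ γ))) ∧
    ∀ Ω : Fin 3 → ℝ,
      Tendsto
        (fun ε : ℝ =>
          (I * (I + ε • vecMulVec γ γ)⁻¹) *ᵥ (crossProduct (I *ᵥ Ω) Ω))
        atTop
        (nhds (crossProduct (I *ᵥ Ω) Ω -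
          (((crossProduct (I *ᵥ Ω) Ω) ⬝ᵥ (I⁻¹ *ᵥ γ)) /
            ((I⁻¹ *ᵥ γ) ⬝ᵥ γ)) • γ)) := by
  have hdet : IsUnit I.det := hIpos.det_pos.ne'.isUnit
  have hc : (I⁻¹ *ᵥ γ) ⬝ᵥ γ ≠ 0 := by
    simpa [dotProduct_comm] using (hIpos.inv.dotProduct_mulVec_pos hγ).ne'
  have hinv := tendsto_inv_one_add_smul_vecMulVec_atTop hc
  refine ⟨hinv, fun Ω => ?_⟩
  set w := crossProduct (I *ᵥ Ω) Ω
  have hmulVec : (1 - ((I⁻¹ *ᵥ γ) ⬝ᵥ γ)⁻¹ • vecMulVec γ (I⁻¹ *ᵥ γ)) *ᵥ w =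
      w - ((w ⬝ᵥ (I⁻¹ *ᵥ γ)) / ((I⁻¹ *ᵥ γ) ⬝ᵥ γ)) • γ := by
    rw [sub_mulVec, one_mulVec, smul_mulVec, vecMulVec_mulVec, op_smul_eq_smul, smul_smul,
      dotProduct_comm _ w, inv_mul_eq_div]
  simp_rw [mul_inv_add_smul_vecMulVec_self hIsymm hdet, ← hmulVec]
  exact ((continuous_id.matrix_mulVec continuous_const).tendsto _).comp hinv
end

section
/- If a Killing vector field ξ_Q of the metric K on Q is a section of the constraint distribution D, then the momentum Ψ(q,q̇) = (K_q q̇, ξ_Q(q)) is a first integral of the Lagrange–d'Alembert equations for the nonholonomic geodesic flow (nonholonomic Noether theorem): along any admissible solution curve γ(t) satisfying π(∇_{γ̇}γ̇) = 0 with γ̇ ∈ D, the function (K γ̇, ξ_Q∘γ) is constant. -/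
open Finset

private lemma lin_expand {n : ℕ} (f : (Fin n → ℝ) → ℝ) (hf : IsLinearMap ℝ f)
    (v : Fin n → ℝ) : f v = ∑ j, v j * f (Pi.single j 1) := by
  conv_lhs => rw [← Finset.univ_sum_single v]
  have hms := map_sum (IsLinearMap.mk' f hf) (fun i => Pi.single i (v i)) Finset.univ
  simp only [IsLinearMap.mk'_apply] at hms
  rw [hms]
  refine Finset.sum_congr rfl fun j _ => ?_
  have h : Pi.single j (v j) = v j • (Pi.single j 1 : Fin n → ℝ) := by
    rw [← Pi.single_smul, smul_eq_mul, mul_one]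
  simp [h, hf.map_smul]

/-- **Nonholonomic Noether theorem** (in coordinates). If a Killing vector
field `ξ` of the metric `K` is a section of the constraint distribution `D`,
then the momentum `(K γ̇, ξ∘γ)` is constant along every nonholonomic geodesic,
i.e. along every admissible curve `γ` with `π(∇_{γ̇}γ̇) = 0`, `γ̇ ∈ D`. -/
theorem nonholonomic_noether {n : ℕ}
    -- the Riemannian metric as a bilinear form `Kb q u v = (K_q u, v)`
    (Kb : (Fin n → ℝ) → (Fin n → ℝ) → (Fin n → ℝ) → ℝ)
    (hKsmooth : ∀ u v, ContDiff ℝ (⊤ : ℕ∞) fun q => Kb q u v)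
    (hKlin : ∀ q u, IsLinearMap ℝ (Kb q u))
    (hKsymm : ∀ q u v, Kb q u v = Kb q v u)
    (hKpos : ∀ q (v : Fin n → ℝ), v ≠ 0 → 0 < Kb q v v)
    -- the Christoffel symbols of the Levi-Civita connection of `K`
    (C : (Fin n → ℝ) → (Fin n → ℝ) → (Fin n → ℝ) → (Fin n → ℝ))
    (hC : ∀ q u v w, Kb q (C q u v) w =
      (1 / 2) * (fderiv ℝ (fun q => Kb q v w) q u +
        fderiv ℝ (fun q => Kb q u w) q v -
        fderiv ℝ (fun q => Kb q u v) q w))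
    -- the Killing field `ξ`
    (ξ : (Fin n → ℝ) → (Fin n → ℝ)) (hξsmooth : ContDiff ℝ (⊤ : ℕ∞) ξ)
    (hKilling : ∀ q u v,
      fderiv ℝ (fun q => Kb q u v) q (ξ q) +
        Kb q (fderiv ℝ ξ q u) v + Kb q u (fderiv ℝ ξ q v) = 0)
    -- the constraint distribution, containing `ξ`
    (Dst : (Fin n → ℝ) → Submodule ℝ (Fin n → ℝ))
    (hξD : ∀ q, ξ q ∈ Dst q)
    -- an admissible nonholonomic geodesic `γ`
    (γ γ' γ'' : ℝ → Fin n → ℝ)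
    (hγ : ∀ t, HasDerivAt γ (γ' t) t)
    (hγ' : ∀ t, HasDerivAt γ' (γ'' t) t)
    (hadm : ∀ t, γ' t ∈ Dst (γ t))
    -- `∇_{γ̇}γ̇ = γ̈ + Γ(γ̇,γ̇)` is `K`-orthogonal to `D`, i.e. `π(∇_{γ̇}γ̇) = 0`
    (heq : ∀ t, ∀ η ∈ Dst (γ t),
      Kb (γ t) (γ'' t + C (γ t) (γ' t) (γ' t)) η = 0) :
    ∀ t, HasDerivAt (fun s => Kb (γ s) (γ' s) (ξ (γ s))) 0 t := by
  -- metric coefficients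
  set G : Fin n → Fin n → (Fin n → ℝ) → ℝ :=
    fun i j q => Kb q (Pi.single i 1) (Pi.single j 1) with hG
  -- bilinear expansion of Kb
  have hexp : ∀ q u v, Kb q u v = ∑ i, ∑ j, u i * v j * G i j q := by
    intro q u v
    rw [hKsymm, lin_expand (Kb q v) (hKlin q v)]
    refine Finset.sum_congr rfl fun i _ => ?_
    rw [hKsymm, lin_expand (Kb q (Pi.single i 1)) (hKlin q _), Finset.mul_sum]
    refine Finset.sum_congr rfl fun j _ => ?_
    ring
  have hGdiff : ∀ i j, Differentiable ℝ (G i j) :=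
    fun i j => (hKsmooth _ _).differentiable (by simp)
  -- expansion of the fderiv of Kb
  have hfd : ∀ (u v w q₀ : Fin n → ℝ),
      fderiv ℝ (fun q => Kb q u v) q₀ w
        = ∑ i, ∑ j, u i * v j * fderiv ℝ (G i j) q₀ w := by
    intro u v w q₀
    have h1 : HasFDerivAt (fun q => Kb q u v)
        (∑ i, ∑ j, (u i * v j) • fderiv ℝ (G i j) q₀) q₀ := by
      have : (fun q => Kb q u v) = fun q => ∑ i, ∑ j, u i * v j * G i j q :=
        funext fun q => hexp q u v
      rw [this]
      refine HasFDerivAt.fun_sum fun i _ => HasFDerivAt.fun_sum fun j _ => ?_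
      simpa [smul_smul] using ((hGdiff i j q₀).hasFDerivAt.fun_const_smul (u i * v j))
    rw [h1.fderiv]
    simp [mul_assoc]
  intro t
  -- derivatives of the component curves
  have hξγ : HasDerivAt (fun s => ξ (γ s)) (fderiv ℝ ξ (γ t) (γ' t)) t :=
    ((hξsmooth.differentiable (by simp) (γ t)).hasFDerivAt).comp_hasDerivAt t (hγ t)
  have hGγ : ∀ i j, HasDerivAt (fun s => G i j (γ s))
      (fderiv ℝ (G i j) (γ t) (γ' t)) t :=
    fun i j => ((hGdiff i j (γ t)).hasFDerivAt).comp_hasDerivAt t (hγ t)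
  have hterm : ∀ i j, HasDerivAt (fun s => γ' s i * ξ (γ s) j * G i j (γ s))
      ((γ'' t i * ξ (γ t) j + γ' t i * fderiv ℝ ξ (γ t) (γ' t) j) * G i j (γ t)
        + γ' t i * ξ (γ t) j * fderiv ℝ (G i j) (γ t) (γ' t)) t := by
    intro i j
    exact (((hasDerivAt_pi.mp (hγ' t)) i |>.mul ((hasDerivAt_pi.mp hξγ) j)).mul (hGγ i j))
  have hsum : HasDerivAt (fun s => ∑ i, ∑ j, γ' s i * ξ (γ s) j * G i j (γ s))
      (∑ i, ∑ j, ((γ'' t i * ξ (γ t) j + γ' t i * fderiv ℝ ξ (γ t) (γ' t) j) * G i j (γ t)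
        + γ' t i * ξ (γ t) j * fderiv ℝ (G i j) (γ t) (γ' t))) t := by
    refine HasDerivAt.fun_sum fun i _ => ?_
    exact HasDerivAt.fun_sum fun j _ => hterm i j
  -- notation
  set q := γ t
  set u := γ' t
  set a := γ'' t
  set Dξ := fderiv ℝ ξ q (γ' t) with hDξ
  -- the derivative value equals A + B + E
  have hval : (∑ i, ∑ j, ((a i * ξ q j + u i * Dξ j) * G i j q
        + u i * ξ q j * fderiv ℝ (G i j) q u))
      = fderiv ℝ (fun p => Kb p u (ξ q)) q u + Kb q a (ξ q) + Kb q u Dξ := by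
    have : ∀ i j, ((a i * ξ q j + u i * Dξ j) * G i j q
        + u i * ξ q j * fderiv ℝ (G i j) q u)
        = a i * ξ q j * G i j q + u i * Dξ j * G i j q
          + u i * ξ q j * fderiv ℝ (G i j) q u := by intro i j; ring
    simp only [this]
    simp only [Finset.sum_add_distrib]
    rw [← hexp q a (ξ q), ← hexp q u Dξ, ← hfd u (ξ q) u q]
    ring
  -- algebra: A + B + E = 0
  have hadd : Kb q (a + C q u u) (ξ q) = Kb q a (ξ q) + Kb q (C q u u) (ξ q) := by
    rw [hKsymm q _ (ξ q), (hKlin q (ξ q)).map_add, hKsymm q (ξ q) a, hKsymm q (ξ q)]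
  have hB : Kb q a (ξ q) + Kb q (C q u u) (ξ q) = 0 := by
    rw [← hadd]; exact heq t (ξ q) (hξD q)
  have hCval := hC q u u (ξ q)
  have hKill := hKilling q u u
  have hE : Kb q (fderiv ℝ ξ q u) u = Kb q u Dξ := by rw [hKsymm, hDξ]
  have hzero : fderiv ℝ (fun p => Kb p u (ξ q)) q u + Kb q a (ξ q) + Kb q u Dξ = 0 := by
    rw [hE] at hKill
    have hB' : Kb q a (ξ q) = -Kb q (C q u u) (ξ q) := by linarith
    rw [hB', hCval]
    linarith
  have hfun : (fun s => Kb (γ s) (γ' s) (ξ (γ s)))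
      = fun s => ∑ i, ∑ j, γ' s i * ξ (γ s) j * G i j (γ s) :=
    funext fun s => hexp (γ s) (γ' s) (ξ (γ s))
  rw [hfun]
  have := hsum
  rw [hval, hzero] at this
  exact this
end
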